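/- arXiv:2205.12794 — 12 statements merged into one kernel-verified Lean document; each statement's English description precedes it below -/
import Mathlib

section
/- There exists a unique k-linear map ∂ : R → R such that ∂(1) = 0, ∂(x₁) = ∂(x₂) = 1, and the twisted Leibniz rule ∂(f·g) = ∂(f)·g + s(f)·∂(g) holds for all f, g ∈ R. -/
/-!
The existence of `∂` comes from a representation of `R` by upper triangular matrices:
`f ↦ !![s f, ∂ f; 0, f]` is multiplicative exactly when `∂` satisfies the twisted Leibniz rule.
So we send `xᵢ` to `!![s xᵢ, 1; 0, xᵢ]`, check that these matrices anticommute, and read `∂` off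
the upper right entry. Uniqueness holds because two twisted derivations agreeing on `1` and on
generators agree on the algebra they generate.
-/

/-- The anticommutation relation `x₁x₂ + x₂x₁ = 0` on the free `k`-algebra
on two generators. -/
inductive OddRel (k : Type*) [CommRing k] :
    FreeAlgebra k (Fin 2) → FreeAlgebra k (Fin 2) → Prop
  | anticomm : OddRel k
      (FreeAlgebra.ι k (0 : Fin 2) * FreeAlgebra.ι k (1 : Fin 2) +
        FreeAlgebra.ι k (1 : Fin 2) * FreeAlgebra.ι k (0 : Fin 2)) 0

/-- The `k`-algebra of skew polynomials in two variables,
`R = k⟨x₁,x₂⟩/(x₁x₂ + x₂x₁)`. -/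
abbrev OddPoly (k : Type*) [CommRing k] := RingQuot (OddRel k)

/-- The generators `x₁ = X k 0` and `x₂ = X k 1` of `R`. -/
noncomputable def X (k : Type*) [CommRing k] (i : Fin 2) : OddPoly k :=
  RingQuot.mkAlgHom k (OddRel k) (FreeAlgebra.ι k i)

section TwistedLeibniz

variable {k A : Type*} [CommSemiring k] [Semiring A] [Algebra k A]

theorem eqOn_adjoin_of_twisted_leibniz (σ : A → A) {D D' : A →ₗ[k] A} {s : Set A}
    (h1 : D 1 = D' 1) (hs : Set.EqOn D D' s)
    (hD : ∀ f g, D (f * g) = D f * g + σ f * D g)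
    (hD' : ∀ f g, D' (f * g) = D' f * g + σ f * D' g) :
    Set.EqOn D D' (Algebra.adjoin k s) := by
  intro f hf
  induction hf using Algebra.adjoin_induction with
  | mem x hx => exact hs hx
  | algebraMap r => rw [Algebra.algebraMap_eq_smul_one, map_smul, map_smul, h1]
  | add x y _ _ hx hy => rw [map_add, map_add, hx, hy]
  | mul x y _ _ hx hy => rw [hD, hD', hx, hy]

theorem matrix_apply_zero_one_mul_of_diag (σ : A → A) (Φ : A →ₐ[k] Matrix (Fin 2) (Fin 2) A)
    (h00 : ∀ f, Φ f 0 0 = σ f) (h11 : ∀ f, Φ f 1 1 = f) (f g : A) :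
    Φ (f * g) 0 1 = Φ f 0 1 * g + σ f * Φ g 0 1 := by
  rw [map_mul, Matrix.mul_apply, Fin.sum_univ_two, h00, h11, add_comm]

end TwistedLeibniz

namespace OddPoly

variable {k : Type*} [CommRing k]

theorem X_mul_X_add_X_mul_X : X k 0 * X k 1 + X k 1 * X k 0 = 0 := by
  simpa only [X, map_add, map_mul, map_zero] using
    RingQuot.mkAlgHom_rel k (OddRel.anticomm (k := k))

theorem adjoin_range_X : Algebra.adjoin k (Set.range (X k)) = ⊤ := by
  rw [show Set.range (X k) = RingQuot.mkAlgHom k (OddRel k) '' Set.range (FreeAlgebra.ι k) by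
      rw [← Set.range_comp]; rfl,
    ← AlgHom.map_adjoin, FreeAlgebra.adjoin_range_ι, Algebra.map_top,
    (AlgHom.range_eq_top _).mpr (RingQuot.mkAlgHom_surjective k (OddRel k))]

variable (s : OddPoly k ≃ₐ[k] OddPoly k) (hs1 : s (X k 0) = - X k 1) (hs2 : s (X k 1) = - X k 0)

noncomputable def triangularRep : OddPoly k →ₐ[k] Matrix (Fin 2) (Fin 2) (OddPoly k) :=
  RingQuot.liftAlgHom k (s := OddRel k)
    ⟨FreeAlgebra.lift k (fun i => !![s (X k i), 1; 0, X k i]), by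
      rintro _ _ ⟨⟩
      simp only [map_add, map_mul, map_zero, FreeAlgebra.lift_ι_apply, Matrix.mul_fin_two]
      ext i j
      fin_cases i <;> fin_cases j
      · simp [← map_mul, ← map_add, X_mul_X_add_X_mul_X]
      · simp [hs1, hs2]
      · simp
      · simp [X_mul_X_add_X_mul_X]⟩

theorem triangularRep_X (i : Fin 2) :
    triangularRep s hs1 hs2 (X k i) = !![s (X k i), 1; 0, X k i] :=
  (RingQuot.liftAlgHom_mkAlgHom_apply _ _ _ _).trans (FreeAlgebra.lift_ι_apply _ _)

theorem triangularRep_diag (f : OddPoly k) :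
    triangularRep s hs1 hs2 f 0 0 = s f ∧ triangularRep s hs1 hs2 f 1 0 = 0 ∧
      triangularRep s hs1 hs2 f 1 1 = f := by
  have hf : f ∈ Algebra.adjoin k (Set.range (X k)) := by
    rw [adjoin_range_X]; exact Algebra.mem_top
  induction hf using Algebra.adjoin_induction with
  | mem x hx =>
    obtain ⟨i, rfl⟩ := hx
    simp [triangularRep_X]
  | algebraMap r => simp [Matrix.algebraMap_matrix_apply]
  | add x y _ _ hx hy => simp [hx, hy]
  | mul x y _ _ hx hy => simp [Matrix.mul_apply, Fin.sum_univ_two, hx, hy]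

noncomputable def twistedDeriv : OddPoly k →ₗ[k] OddPoly k :=
  (Matrix.entryLinearMap k (OddPoly k) 0 1).comp (triangularRep s hs1 hs2).toLinearMap

theorem twistedDeriv_apply (f : OddPoly k) :
    twistedDeriv s hs1 hs2 f = triangularRep s hs1 hs2 f 0 1 := rfl

theorem twistedDeriv_one : twistedDeriv s hs1 hs2 1 = 0 := by
  simp [twistedDeriv_apply]

theorem twistedDeriv_X (i : Fin 2) : twistedDeriv s hs1 hs2 (X k i) = 1 := by
  simp [twistedDeriv_apply, triangularRep_X]

theorem twistedDeriv_mul (f g : OddPoly k) :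
    twistedDeriv s hs1 hs2 (f * g) =
      twistedDeriv s hs1 hs2 f * g + s f * twistedDeriv s hs1 hs2 g :=
  matrix_apply_zero_one_mul_of_diag s _ (fun f => (triangularRep_diag s hs1 hs2 f).1)
    (fun f => (triangularRep_diag s hs1 hs2 f).2.2) f g

end OddPoly

/-- There is a unique `k`-linear map `∂ : R → R` with `∂1 = 0`,
`∂x₁ = ∂x₂ = 1`, satisfying the twisted Leibniz rule
`∂(fg) = ∂(f)g + s(f)∂(g)`. -/
theorem stmt1 (k : Type*) [CommRing k]
    (s : OddPoly k ≃ₐ[k] OddPoly k)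
    (hs1 : s (X k 0) = - X k 1) (hs2 : s (X k 1) = - X k 0)
 :
    ∃! D : OddPoly k →ₗ[k] OddPoly k,
      D 1 = 0 ∧ D (X k 0) = 1 ∧ D (X k 1) = 1 ∧
      ∀ f g : OddPoly k, D (f * g) = D f * g + s f * D g := by
  let δ := OddPoly.twistedDeriv s hs1 hs2
  have hδX := OddPoly.twistedDeriv_X s hs1 hs2
  have hδ1 := OddPoly.twistedDeriv_one s hs1 hs2
  have hδmul := OddPoly.twistedDeriv_mul s hs1 hs2
  refine ⟨δ, ⟨hδ1, hδX 0, hδX 1, hδmul⟩, ?_⟩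
  rintro D ⟨h1, hX0, hX1, hmul⟩
  have hX : Set.EqOn D δ (Set.range (X k)) := by
    rintro _ ⟨i, rfl⟩
    fin_cases i
    · exact hX0.trans (hδX 0).symm
    · exact hX1.trans (hδX 1).symm
  have hEq := eqOn_adjoin_of_twisted_leibniz s (h1.trans hδ1.symm) hX hmul hδmul
  rw [OddPoly.adjoin_range_X] at hEq
  exact LinearMap.ext fun f => hEq Algebra.mem_top
end

section
/- The odd Demazure operator anticommutes with the transposition: ∂ ∘ s = −(s ∘ ∂) as k-linear maps R → R. Consequently, s maps ker ∂ onto ker ∂. -/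
theorem adjoin_X (k : Type*) [CommRing k] :
    Algebra.adjoin k (Set.range (X k)) = ⊤ := by
  rw [eq_top_iff]
  intro y _
  obtain ⟨x, rfl⟩ := RingQuot.mkAlgHom_surjective k (OddRel k) y
  have hx : x ∈ (⊤ : Subalgebra k (FreeAlgebra k (Fin 2))) := trivial
  rw [← FreeAlgebra.adjoin_range_ι] at hx
  induction hx using Algebra.adjoin_induction with
  | mem a ha =>
    obtain ⟨i, rfl⟩ := ha
    exact Algebra.subset_adjoin ⟨i, rfl⟩
  | algebraMap r => rw [AlgHom.commutes]; exact Subalgebra.algebraMap_mem _ r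
  | add a b _ _ ha hb => rw [map_add]; exact add_mem (ha trivial) (hb trivial)
  | mul a b _ _ ha hb => rw [map_mul]; exact mul_mem (ha trivial) (hb trivial)

/-- The odd Demazure operator anticommutes with the transposition:
`∂ ∘ s = -(s ∘ ∂)`; consequently `s` maps `ker ∂` onto `ker ∂`. -/
theorem stmt2 (k : Type*) [CommRing k]
    (s : OddPoly k ≃ₐ[k] OddPoly k)
    (hs1 : s (X k 0) = - X k 1) (hs2 : s (X k 1) = - X k 0)
    (D : OddPoly k →ₗ[k] OddPoly k)
    (hD0 : D 1 = 0) (hD1 : D (X k 0) = 1) (hD2 : D (X k 1) = 1)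
    (hDL : ∀ f g : OddPoly k, D (f * g) = D f * g + s f * D g)
 :
    (∀ f : OddPoly k, D (s f) = - s (D f)) ∧
    Submodule.map s.toLinearMap (LinearMap.ker D) = LinearMap.ker D := by
  have key : ∀ f : OddPoly k, D (s f) = - s (D f) := by
    intro f
    have hf : f ∈ (⊤ : Subalgebra k (OddPoly k)) := trivial
    rw [← adjoin_X k] at hf
    induction hf using Algebra.adjoin_induction with
    | mem a ha =>
      obtain ⟨i, rfl⟩ := ha
      fin_cases i
      · simp [hs1, hs2, hD1, hD2, map_neg]
      · simp [hs1, hs2, hD1, hD2, map_neg]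
    | algebraMap r =>
      have h1 : (algebraMap k (OddPoly k)) r = r • (1 : OddPoly k) := by
        rw [Algebra.algebraMap_eq_smul_one]
      rw [AlgEquiv.commutes, h1, map_smul, hD0, smul_zero, map_zero, neg_zero]
    | add a b _ _ ha hb =>
      simp only [map_add, ha, hb, neg_add]
    | mul a b _ _ ha hb =>
      simp only [map_mul, hDL, ha, hb, map_add, neg_add]
      have h1 : -s (D a) * s b = -(s (D a) * s b) := neg_mul (s (D a)) (s b)
      have h2 : s (s a) * -s (D b) = -(s (s a) * s (D b)) := mul_neg (s (s a)) (s (D b))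
      rw [h1, h2]
  refine ⟨key, le_antisymm ?_ ?_⟩
  · rintro _ ⟨f, hf, rfl⟩
    simp only [SetLike.mem_coe, LinearMap.mem_ker] at hf ⊢
    simp [key f, hf]
  · intro g hg
    simp only [LinearMap.mem_ker] at hg
    refine ⟨s.symm g, ?_, s.apply_symm_apply g⟩
    have h := key (s.symm g)
    rw [s.apply_symm_apply, hg] at h
    simp only [SetLike.mem_coe, LinearMap.mem_ker]
    have h0 : s (D (s.symm g)) = 0 := neg_eq_zero.mp h.symm
    exact s.injective (by simpa using h0)
end

section
/- The kernel of the odd Demazure operator equals its image: ker ∂ = im ∂ as k-submodules of R. In particular ∂ ∘ ∂ = 0. -/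
/-- The kernel of the odd Demazure operator equals its image; in
particular `∂ ∘ ∂ = 0`. -/
theorem stmt3 (k : Type*) [CommRing k]
    (s : OddPoly k ≃ₐ[k] OddPoly k)
    (hs1 : s (X k 0) = - X k 1) (hs2 : s (X k 1) = - X k 0)
    (D : OddPoly k →ₗ[k] OddPoly k)
    (hD0 : D 1 = 0) (hD1 : D (X k 0) = 1) (hD2 : D (X k 1) = 1)
    (hDL : ∀ f g : OddPoly k, D (f * g) = D f * g + s f * D g)
 :
    LinearMap.ker D = LinearMap.range D ∧ ∀ f : OddPoly k, D (D f) = 0 := by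
  have key : ∀ f : OddPoly k, s (s f) = f ∧ D (s f) + s (D f) = 0 ∧ D (D f) = 0 := by
    intro f
    obtain ⟨a, rfl⟩ := RingQuot.mkAlgHom_surjective k (OddRel k) f
    induction a with
    | grade0 c =>
      have hmap : (RingQuot.mkAlgHom k (OddRel k)) (algebraMap k _ c)
          = algebraMap k (OddPoly k) c := by
        simp [AlgHom.commutes]
      rw [hmap]
      have hDc : D (algebraMap k (OddPoly k) c) = 0 := by
        rw [Algebra.algebraMap_eq_smul_one, map_smul, hD0, smul_zero]
      refine ⟨by simp, by simp [hDc], by rw [hDc, map_zero]⟩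
    | grade1 i =>
      fin_cases i
      · show s (s (X k 0)) = X k 0 ∧ D (s (X k 0)) + s (D (X k 0)) = 0
          ∧ D (D (X k 0)) = 0
        simp [hs1, hs2, hD1, hD2, hD0]
      · show s (s (X k 1)) = X k 1 ∧ D (s (X k 1)) + s (D (X k 1)) = 0
          ∧ D (D (X k 1)) = 0
        simp [hs1, hs2, hD1, hD2, hD0]
    | mul a b ha hb =>
      rw [map_mul]
      set fa := (RingQuot.mkAlgHom k (OddRel k)) a
      set fb := (RingQuot.mkAlgHom k (OddRel k)) b
      obtain ⟨ha1, ha2, ha3⟩ := ha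
      obtain ⟨hb1, hb2, hb3⟩ := hb
      refine ⟨by rw [map_mul, map_mul, ha1, hb1], ?_, ?_⟩
      · have e : D (s (fa * fb)) + s (D (fa * fb))
            = (D (s fa) + s (D fa)) * s fb + s (s fa) * (D (s fb) + s (D fb)) := by
          rw [map_mul, hDL (s fa) (s fb), hDL fa fb, map_add, map_mul, map_mul]
          noncomm_ring
        rw [e, ha2, hb2, zero_mul, mul_zero, add_zero]
      · have e : D (D (fa * fb))
            = D (D fa) * fb + (D (s fa) + s (D fa)) * D fb + s (s fa) * D (D fb) := by
          rw [hDL, map_add, hDL, hDL]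
          noncomm_ring
        rw [e, ha2, ha3, hb3, zero_mul, zero_mul, mul_zero, add_zero, zero_add]
    | add a b ha hb =>
      rw [map_add]
      obtain ⟨ha1, ha2, ha3⟩ := ha
      obtain ⟨hb1, hb2, hb3⟩ := hb
      refine ⟨by rw [map_add, map_add, ha1, hb1], ?_, ?_⟩
      · rw [map_add, map_add, map_add, map_add, add_add_add_comm, ha2, hb2, add_zero]
      · rw [map_add, map_add, ha3, hb3, add_zero]
  have hDD : ∀ f : OddPoly k, D (D f) = 0 := fun f => (key f).2.2
  refine ⟨?_, hDD⟩
  ext f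
  constructor
  · intro hf
    rw [LinearMap.mem_ker] at hf
    refine ⟨X k 0 * f, ?_⟩
    rw [hDL, hD1, one_mul, hf, mul_zero, add_zero]
  · rintro ⟨g, rfl⟩
    exact LinearMap.mem_ker.mpr (hDD g)
end

section
/- The kernel of the odd Demazure operator is a k-subalgebra of R, and it equals the k-subalgebra of R generated by the elements E₁ = x₁ − x₂ and E₂ = x₁x₂. Moreover these generators anticommute: E₁E₂ + E₂E₁ = 0 in R. -/
/- Auxiliary purely ring-theoretic identities, proved in an arbitrary ring. -/

private lemma aux_yx {R : Type*} [Ring R] (x y : R) (h : x * y + y * x = 0) :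
    y * x = -(x * y) := by
  linear_combination (norm := noncomm_ring) h

private lemma aux_E {R : Type*} [Ring R] (x y : R) (h : x * y + y * x = 0) :
    (x - y) * (x * y) + (x * y) * (x - y) = 0 := by
  linear_combination (norm := noncomm_ring) x * h - h * y

private lemma aux_x2 {R : Type*} [Ring R] (x y : R) (h : x * y + y * x = 0) :
    x * x = -(x * y) + (x - y) * x := by
  linear_combination (norm := noncomm_ring) h

private lemma aux_mE1 {R : Type*} [Ring R] (x y : R) (h : x * y + y * x = 0) :
    x * (x - y) = (-(x * y) + -(x * y)) + (x - y) * x := by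
  linear_combination (norm := noncomm_ring) h

private lemma aux_mE2 {R : Type*} [Ring R] (x y : R) (h : x * y + y * x = 0) :
    x * (x * y) = 0 + -(x * y) * x := by
  linear_combination (norm := noncomm_ring) x * h

private lemma aux_madd {R : Type*} [Ring R] {x u v a b c d : R}
    (hu : x * u = a + b * x) (hv : x * v = c + d * x) :
    x * (u + v) = (a + c) + (b + d) * x := by
  rw [mul_add, hu, hv]; noncomm_ring

private lemma aux_mmul {R : Type*} [Ring R] {x u v p q p' q' : R}
    (hu : x * u = p + q * x) (hv : x * v = p' + q' * x) :
    x * (u * v) = (p * v + q * p') + (q * q') * x := by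
  rw [← mul_assoc, hu, add_mul, mul_assoc, hv]; noncomm_ring

private lemma aux_one {R : Type*} [Ring R] (x : R) : x = 0 + 1 * x := by
  noncomm_ring

private lemma aux_two {R : Type*} [Ring R] (x y : R) : y = -(x - y) + 1 * x := by
  noncomm_ring

private lemma aux_add {R : Type*} [Ring R] (a b c d x : R) :
    (a + b * x) + (c + d * x) = (a + c) + (b + d) * x := by
  noncomm_ring

private lemma aux_mul {R : Type*} [Ring R] (a b c d p q p' q' x y : R)
    (h : x * y + y * x = 0) (hpc : x * c = p + q * x) (hpd : x * d = p' + q' * x) :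
    (a + b * x) * (c + d * x) =
      (a * c + b * p - b * (q' * (x * y))) +
        (a * d + b * q + b * p' + b * (q' * (x - y))) * x := by
  linear_combination (norm := noncomm_ring) b * hpc + b * hpd * x + b * q' * h

/-- `ker ∂` equals the `k`-subalgebra of `R` generated by `E₁ = x₁ - x₂`
and `E₂ = x₁x₂` (in particular it is a `k`-subalgebra of `R`), and these
generators anticommute. -/
theorem stmt4 (k : Type*) [CommRing k]
    (s : OddPoly k ≃ₐ[k] OddPoly k)
    (hs1 : s (X k 0) = - X k 1) (hs2 : s (X k 1) = - X k 0)
    (D : OddPoly k →ₗ[k] OddPoly k)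
    (hD0 : D 1 = 0) (hD1 : D (X k 0) = 1) (hD2 : D (X k 1) = 1)
    (hDL : ∀ f g : OddPoly k, D (f * g) = D f * g + s f * D g)
 :
    (∀ f : OddPoly k,
      f ∈ LinearMap.ker D ↔
        f ∈ Algebra.adjoin k ({X k 0 - X k 1, X k 0 * X k 1} : Set (OddPoly k))) ∧
    (X k 0 - X k 1) * (X k 0 * X k 1) + (X k 0 * X k 1) * (X k 0 - X k 1) = 0 := by
  set x := X k 0 with hx
  set y := X k 1 with hy
  set A := Algebra.adjoin k ({x - y, x * y} : Set (OddPoly k)) with hA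
  clear_value x y A
  -- the defining relation
  have hrel : x * y + y * x = 0 := by
    have h := RingQuot.mkAlgHom_rel k (OddRel.anticomm (k := k))
    simpa [hx, hy, X, map_add, map_mul] using h
  -- membership facts
  have hE1A : x - y ∈ A := by
    rw [hA]; exact Algebra.subset_adjoin (by left; rfl)
  have hE2A : x * y ∈ A := by
    rw [hA]; exact Algebra.subset_adjoin (by right; rfl)
  have hA' : ∀ {g : OddPoly k},
      g ∈ Algebra.adjoin k ({x - y, x * y} : Set (OddPoly k)) → g ∈ A := by
    intro g hg; rw [hA]; exact hg
  -- A is contained in the kernel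
  have hAker : ∀ f ∈ A, D f = 0 := by
    intro f hf
    rw [hA] at hf
    induction hf using Algebra.adjoin_induction with
    | mem g hg =>
      rcases hg with hg | hg
      · rw [hg, map_sub, hD1, hD2, sub_self]
      · rw [hg, hDL, hD1, hD2, hs1, one_mul, mul_one, add_neg_cancel]
    | algebraMap r =>
      rw [Algebra.algebraMap_eq_smul_one, map_smul, hD0, smul_zero]
    | add u v hu hv ihu ihv => rw [map_add, ihu, ihv, add_zero]
    | mul u v hu hv ihu ihv => rw [hDL, ihu, ihv, zero_mul, mul_zero, add_zero]
  -- moving x across elements of A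
  have hxA : ∀ c ∈ A, ∃ a ∈ A, ∃ b ∈ A, x * c = a + b * x := by
    intro c hc
    rw [hA] at hc
    induction hc using Algebra.adjoin_induction with
    | mem g hg =>
      rcases hg with hg | hg
      · refine ⟨-(x * y) + -(x * y), A.add_mem (A.neg_mem hE2A) (A.neg_mem hE2A),
          x - y, hE1A, ?_⟩
        rw [hg]; exact aux_mE1 x y hrel
      · refine ⟨0, A.zero_mem, -(x * y), A.neg_mem hE2A, ?_⟩
        rw [hg]; exact aux_mE2 x y hrel
    | algebraMap r =>
      exact ⟨0, A.zero_mem, algebraMap k _ r, A.algebraMap_mem r,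
        by rw [zero_add, ← Algebra.commutes]⟩
    | add u v hu hv ihu ihv =>
      obtain ⟨a, ha, b, hb, hab⟩ := ihu
      obtain ⟨c', hc', d, hd, hcd⟩ := ihv
      exact ⟨a + c', A.add_mem ha hc', b + d, A.add_mem hb hd, aux_madd hab hcd⟩
    | mul u v hu hv ihu ihv =>
      obtain ⟨p, hp, q, hq, hpq⟩ := ihu
      obtain ⟨p', hp', q', hq', hpq'⟩ := ihv
      exact ⟨p * v + q * p', A.add_mem (A.mul_mem hp (hA' hv)) (A.mul_mem hq hp'),
        q * q', A.mul_mem hq hq', aux_mmul hpq hpq'⟩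
  -- every element of R decomposes as a + b * x with a, b ∈ A
  have hdecomp : ∀ f : OddPoly k, ∃ a ∈ A, ∃ b ∈ A, f = a + b * x := by
    intro f
    obtain ⟨z, rfl⟩ := RingQuot.mkAlgHom_surjective k (OddRel k) f
    induction z using FreeAlgebra.induction with
    | grade0 r =>
      exact ⟨algebraMap k _ r, A.algebraMap_mem r, 0, A.zero_mem,
        by rw [zero_mul, add_zero, AlgHom.commutes]⟩
    | grade1 i =>
      fin_cases i
      · refine ⟨0, A.zero_mem, 1, A.one_mem, ?_⟩
        show X k 0 = 0 + 1 * x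
        rw [← hx]
        exact aux_one x
      · refine ⟨-(x - y), A.neg_mem hE1A, 1, A.one_mem, ?_⟩
        show X k 1 = -(x - y) + 1 * x
        rw [← hy]
        exact aux_two x y
    | mul u v ihu ihv =>
      obtain ⟨a, ha, b, hb, hf⟩ := ihu
      obtain ⟨c, hc, d, hd, hg⟩ := ihv
      obtain ⟨p, hp, q, hq, hpc⟩ := hxA c hc
      obtain ⟨p', hp', q', hq', hpd⟩ := hxA d hd
      refine ⟨a * c + b * p - b * (q' * (x * y)),
        A.sub_mem (A.add_mem (A.mul_mem ha hc) (A.mul_mem hb hp))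
          (A.mul_mem hb (A.mul_mem hq' hE2A)),
        a * d + b * q + b * p' + b * (q' * (x - y)),
        A.add_mem (A.add_mem (A.add_mem (A.mul_mem ha hd) (A.mul_mem hb hq))
          (A.mul_mem hb hp')) (A.mul_mem hb (A.mul_mem hq' hE1A)), ?_⟩
      rw [map_mul, hf, hg]
      exact aux_mul a b c d p q p' q' x y hrel hpc hpd
    | add u v ihu ihv =>
      obtain ⟨a, ha, b, hb, hf⟩ := ihu
      obtain ⟨c, hc, d, hd, hg⟩ := ihv
      exact ⟨a + c, A.add_mem ha hc, b + d, A.add_mem hb hd,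
        by rw [map_add, hf, hg]; exact aux_add a b c d x⟩
  refine ⟨fun f => ⟨?_, fun hf => by simpa [LinearMap.mem_ker] using hAker f hf⟩,
    aux_E x y hrel⟩
  intro hf
  rw [LinearMap.mem_ker] at hf
  obtain ⟨a, ha, b, hb, hab⟩ := hdecomp f
  have hDf : D f = s b := by
    rw [hab, map_add, hAker a ha, hDL, hAker b hb, hD1, zero_mul, mul_one,
      zero_add, zero_add]
  have hb0 : b = 0 := by
    apply s.injective
    rw [← hDf, hf, map_zero]
  rw [hab, hb0, zero_mul, add_zero]
  exact ha
end

section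
/- Setting E₁ = x₁ − x₂ and E₂ = x₁x₂ in R, the family of monomials E₁^a · E₂^b indexed by pairs (a, b) ∈ ℕ × ℕ is a basis of ker ∂ as a k-module. (Equivalently, the ring of odd symmetric polynomials R^s = ker ∂ is isomorphic to k⟨E₁,E₂⟩/(E₁E₂ + E₂E₁).) -/
namespace Stmt5Aux

/-! ### Generic ring identities for elements satisfying `x*y + y*x = 0` -/

section GenericRing

variable {A : Type*} [Ring A] {x y : A}

lemma gyx (h : x * y + y * x = 0) : y * x = -(x * y) := by
  rw [eq_neg_iff_add_eq_zero, add_comm]; exact h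

lemma gswap (h : x * y + y * x = 0) (w : A) : y * (x * w) = -(x * (y * w)) := by
  rw [← mul_assoc, gyx h, neg_mul, mul_assoc]

lemma gE1E2 (h : x * y + y * x = 0) :
    (x * y) * (x - y) = -((x - y) * (x * y)) := by
  simp only [mul_sub, sub_mul, mul_assoc, gswap h, gyx h, mul_neg, neg_neg, neg_sub,
    sub_neg_eq_add]
  abel

lemma gnegpow {u v : A} (h' : u * v = -(v * u)) :
    ∀ n : ℕ, u * v ^ n = (-1 : A) ^ n * (v ^ n * u)
  | 0 => by simp
  | n + 1 => by
    rw [pow_succ, ← mul_assoc, gnegpow h' n, mul_assoc ((-1 : A) ^ n),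
      mul_assoc (v ^ n), h', pow_succ]
    simp [mul_assoc, mul_neg, neg_mul]

lemma gE2E1pow (h : x * y + y * x = 0) (a : ℕ) :
    (x * y) * (x - y) ^ a = (-1 : A) ^ a * ((x - y) ^ a * (x * y)) :=
  gnegpow (gE1E2 h) a

lemma gE1E (a b : ℕ) :
    (x - y) * ((x - y) ^ a * (x * y) ^ b) = (x - y) ^ (a + 1) * (x * y) ^ b := by
  rw [← mul_assoc, ← pow_succ']

lemma gE2E (h : x * y + y * x = 0) (a b : ℕ) :
    (x * y) * ((x - y) ^ a * (x * y) ^ b)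
      = (-1 : A) ^ a * ((x - y) ^ a * (x * y) ^ (b + 1)) := by
  rw [← mul_assoc, gE2E1pow h, mul_assoc, mul_assoc, ← pow_succ']

lemma gxx (h : x * y + y * x = 0) (a b : ℕ) :
    x * (x * ((x - y) ^ a * (x * y) ^ b))
      = x * ((x - y) ^ (a + 1) * (x * y) ^ b)
        + (-1 : A) ^ a * ((x - y) ^ a * (x * y) ^ (b + 1)) := by
  rw [← mul_assoc]
  have hx2 : x * x = x * (x - y) + x * y := by rw [mul_sub]; abel
  rw [hx2, add_mul, mul_assoc, gE1E, gE2E h]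

lemma gyE (a b : ℕ) :
    y * ((x - y) ^ a * (x * y) ^ b)
      = x * ((x - y) ^ a * (x * y) ^ b) - (x - y) ^ (a + 1) * (x * y) ^ b := by
  calc y * ((x - y) ^ a * (x * y) ^ b)
      = (x - (x - y)) * ((x - y) ^ a * (x * y) ^ b) := by rw [sub_sub_cancel]
    _ = x * ((x - y) ^ a * (x * y) ^ b) - (x - y) * ((x - y) ^ a * (x * y) ^ b) := by
        rw [sub_mul]
    _ = x * ((x - y) ^ a * (x * y) ^ b) - (x - y) ^ (a + 1) * (x * y) ^ b := by
        rw [gE1E]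

lemma gyxE (h : x * y + y * x = 0) (a b : ℕ) :
    y * (x * ((x - y) ^ a * (x * y) ^ b))
      = -((-1 : A) ^ a * ((x - y) ^ a * (x * y) ^ (b + 1))) := by
  rw [← mul_assoc, gyx h, neg_mul, gE2E h]

lemma gE00 : (x - y) ^ 0 * (x * y) ^ 0 = (1 : A) := by simp

lemma gz1 (u v : A) : 0 * v + u * 0 = 0 := by simp

lemma gz2 (v : A) : 1 * v + -v * 1 = 0 := by simp

lemma gz3 (u v : A) : 1 * v + u * 0 = v := by simp

end GenericRing

section GenericAlgebra

variable {k : Type*} [CommRing k] {B : Type*} [Ring B] [Algebra k B]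

lemma gsmulAlg (n : ℕ) (v : B) : (-1 : B) ^ n * v = ((-1 : k) ^ n) • v := by
  rw [Algebra.smul_def, map_pow, map_neg, map_one]

end GenericAlgebra

/-! ### The faithful module -/

abbrev Ind := (ℕ × ℕ) ⊕ (ℕ × ℕ)

variable (k : Type*) [CommRing k]

abbrev Md := Ind →₀ k

noncomputable def Y0 : Module.End k (Md k) :=
  Finsupp.lift (Md k) k Ind (Sum.elim
    (fun p => Finsupp.single (Sum.inr p) 1)
    (fun p => Finsupp.single (Sum.inr (p.1 + 1, p.2)) 1
      + Finsupp.single (Sum.inl (p.1, p.2 + 1)) ((-1) ^ p.1)))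

noncomputable def Y1 : Module.End k (Md k) :=
  Finsupp.lift (Md k) k Ind (Sum.elim
    (fun p => Finsupp.single (Sum.inr p) 1 - Finsupp.single (Sum.inl (p.1 + 1, p.2)) 1)
    (fun p => Finsupp.single (Sum.inl (p.1, p.2 + 1)) ((-1) ^ (p.1 + 1))))

variable {k}

lemma lift_single {M : Type*} [AddCommMonoid M] [Module k M] (f : Ind → M) (j : Ind) (c : k) :
    Finsupp.lift M k Ind f (Finsupp.single j c) = c • f j := by
  rw [Finsupp.lift_apply, Finsupp.sum_single_index (by simp)]

lemma Y0_inl (p : ℕ × ℕ) (c : k) :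
    Y0 k (Finsupp.single (Sum.inl p) c) = Finsupp.single (Sum.inr p) c := by
  rw [Y0, lift_single]; simp

lemma Y0_inr (p : ℕ × ℕ) (c : k) :
    Y0 k (Finsupp.single (Sum.inr p) c) = Finsupp.single (Sum.inr (p.1 + 1, p.2)) c
      + Finsupp.single (Sum.inl (p.1, p.2 + 1)) (c * (-1) ^ p.1) := by
  rw [Y0, lift_single]; simp [smul_add, Finsupp.smul_single, smul_eq_mul]

lemma Y1_inl (p : ℕ × ℕ) (c : k) :
    Y1 k (Finsupp.single (Sum.inl p) c) = Finsupp.single (Sum.inr p) c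
      - Finsupp.single (Sum.inl (p.1 + 1, p.2)) c := by
  rw [Y1, lift_single]; simp [smul_sub, Finsupp.smul_single, smul_eq_mul]

lemma Y1_inr (p : ℕ × ℕ) (c : k) :
    Y1 k (Finsupp.single (Sum.inr p) c)
      = Finsupp.single (Sum.inl (p.1, p.2 + 1)) (c * (-1) ^ (p.1 + 1)) := by
  rw [Y1, lift_single]; simp [Finsupp.smul_single, smul_eq_mul]

lemma Yrel : Y0 k * Y1 k + Y1 k * Y0 k = 0 := by
  apply Finsupp.lhom_ext (fun j c => ?_)
  rcases j with p | p <;>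
    simp only [LinearMap.add_apply, Module.End.mul_apply, LinearMap.zero_apply,
      Y0_inl, Y0_inr, Y1_inl, Y1_inr, map_add, map_sub] <;>
  · ext q
    simp only [Finsupp.add_apply, Finsupp.sub_apply, Finsupp.single_apply,
      Finsupp.coe_zero, Pi.zero_apply, pow_succ]
    split_ifs <;> ring

/-! ### The representation of `OddPoly k` -/

variable (k)

noncomputable def rho : OddPoly k →ₐ[k] Module.End k (Md k) :=
  RingQuot.liftAlgHom k ⟨FreeAlgebra.lift k ![Y0 k, Y1 k], by
    rintro _ _ ⟨⟩
    simp only [map_add, map_mul, map_zero, FreeAlgebra.lift_ι_apply,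
      Matrix.cons_val_zero, Matrix.cons_val_one, Matrix.head_cons]
    exact Yrel⟩

lemma rhoX0 : rho k (X k 0) = Y0 k := by
  rw [X, rho, RingQuot.liftAlgHom_mkAlgHom_apply, FreeAlgebra.lift_ι_apply]
  simp

lemma rhoX1 : rho k (X k 1) = Y1 k := by
  rw [X, rho, RingQuot.liftAlgHom_mkAlgHom_apply, FreeAlgebra.lift_ι_apply]
  simp

lemma rhoE1 : rho k (X k 0 - X k 1) = Y0 k - Y1 k := by
  rw [map_sub, rhoX0, rhoX1]

lemma rhoE2 : rho k (X k 0 * X k 1) = Y0 k * Y1 k := by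
  rw [map_mul, rhoX0, rhoX1]

lemma YE1 (n a b : ℕ) :
    ((Y0 k - Y1 k) ^ n) (Finsupp.single (Sum.inl (a, b)) 1)
      = Finsupp.single (Sum.inl (a + n, b)) 1 := by
  induction n generalizing a with
  | zero => simp
  | succ n ih =>
    rw [pow_succ, Module.End.mul_apply]
    have h1 : (Y0 k - Y1 k) (Finsupp.single (Sum.inl (a, b)) 1)
        = Finsupp.single (Sum.inl (a + 1, b)) 1 := by
      rw [LinearMap.sub_apply, Y0_inl, Y1_inl]; abel
    rw [h1, ih (a + 1)]
    have : a + 1 + n = a + (n + 1) := by omega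
    rw [this]

lemma YE2 (n b : ℕ) :
    ((Y0 k * Y1 k) ^ n) (Finsupp.single (Sum.inl (0, b)) 1)
      = Finsupp.single (Sum.inl (0, b + n)) 1 := by
  induction n generalizing b with
  | zero => simp
  | succ n ih =>
    rw [pow_succ, Module.End.mul_apply]
    have h1 : (Y0 k * Y1 k) (Finsupp.single (Sum.inl (0, b)) 1)
        = Finsupp.single (Sum.inl (0, b + 1)) 1 := by
      rw [Module.End.mul_apply, Y1_inl, map_sub, Y0_inl, Y0_inr]
      simp
    rw [h1, ih (b + 1)]
    have : b + 1 + n = b + (n + 1) := by omega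
    rw [this]

/-! ### The candidate basis of `OddPoly k` -/

noncomputable def Ee (p : ℕ × ℕ) : OddPoly k :=
  (X k 0 - X k 1) ^ p.1 * (X k 0 * X k 1) ^ p.2

noncomputable def Gf : Ind → OddPoly k :=
  Sum.elim (Ee k) (fun p => X k 0 * Ee k p)

lemma Ee_def (p : ℕ × ℕ) : Ee k p = (X k 0 - X k 1) ^ p.1 * (X k 0 * X k 1) ^ p.2 := rfl

lemma Gf_inl (p : ℕ × ℕ) : Gf k (Sum.inl p) = Ee k p := rfl

lemma Gf_inr (p : ℕ × ℕ) : Gf k (Sum.inr p) = X k 0 * Ee k p := rfl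

lemma rel : X k 0 * X k 1 + X k 1 * X k 0 = 0 := by
  have h := RingQuot.mkAlgHom_rel k (OddRel.anticomm (k := k))
  simpa [X, map_add, map_mul] using h

/-- coordinates via the representation -/
noncomputable def cm : OddPoly k →ₗ[k] Md k :=
  (LinearMap.applyₗ (Finsupp.single (Sum.inl (0, 0)) (1 : k))) ∘ₗ (rho k).toLinearMap

lemma cm_apply (f : OddPoly k) :
    cm k f = rho k f (Finsupp.single (Sum.inl (0, 0)) 1) := rfl

lemma cmG (j : Ind) : cm k (Gf k j) = Finsupp.single j 1 := by
  have hE : ∀ p : ℕ × ℕ, rho k (Ee k p) (Finsupp.single (Sum.inl (0, 0)) 1)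
      = Finsupp.single (Sum.inl p) 1 := by
    intro p
    rw [Ee_def, map_mul, map_pow, map_pow, rhoE1, rhoE2, Module.End.mul_apply,
      YE2, YE1]
    simp
  rcases j with p | p
  · rw [Gf_inl, cm_apply, hE]
  · rw [Gf_inr, cm_apply, map_mul, Module.End.mul_apply, hE, rhoX0, Y0_inl]

lemma Gindep : LinearIndependent k (Gf k) := by
  apply LinearIndependent.of_comp (cm k)
  have h : (cm k) ∘ (Gf k) = fun j => Finsupp.single j (1 : k) := funext (cmG k)
  rw [h]
  simpa [Finsupp.coe_basisSingleOne] using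
    (Finsupp.basisSingleOne (R := k) (ι := Ind)).linearIndependent

lemma Eindep : LinearIndependent k (Ee k) :=
  (Gindep k).comp Sum.inl Sum.inl_injective

/-! ### Spanning -/

lemma adjoin_top : Algebra.adjoin k (Set.range (X k)) = ⊤ := by
  have h : Set.range (X k) = (RingQuot.mkAlgHom k (OddRel k)) '' Set.range (FreeAlgebra.ι k) := by
    rw [← Set.range_comp]; rfl
  rw [h, ← AlgHom.map_adjoin, FreeAlgebra.adjoin_range_ι, Algebra.map_top]
  exact (AlgHom.range_eq_top _).mpr (RingQuot.mkAlgHom_surjective k _)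

lemma mem_span_mul0 (m : OddPoly k)
    (hm : m ∈ Submodule.span k (Set.range (Gf k))) :
    X k 0 * m ∈ Submodule.span k (Set.range (Gf k)) := by
  induction hm using Submodule.span_induction with
  | mem v hv =>
    obtain ⟨j, rfl⟩ := hv
    rcases j with p | p
    · exact Submodule.subset_span ⟨Sum.inr p, rfl⟩
    · rw [Gf_inr, Ee_def, gxx (rel k), gsmulAlg (k := k)]
      refine Submodule.add_mem _ (Submodule.subset_span ⟨Sum.inr (p.1 + 1, p.2), rfl⟩) ?_
      exact Submodule.smul_mem _ _ (Submodule.subset_span ⟨Sum.inl (p.1, p.2 + 1), rfl⟩)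
  | zero =>
    have h : X k 0 * (0 : OddPoly k) = 0 := mul_zero _
    rw [h]; exact Submodule.zero_mem _
  | add u v hu hv ihu ihv =>
    have h : X k 0 * (u + v) = X k 0 * u + X k 0 * v := mul_add _ _ _
    rw [h]; exact Submodule.add_mem _ ihu ihv
  | smul c v hv ihv =>
    have h : X k 0 * (c • v) = c • (X k 0 * v) := mul_smul_comm _ _ _
    rw [h]; exact Submodule.smul_mem _ _ ihv

lemma mem_span_mul1 (m : OddPoly k)
    (hm : m ∈ Submodule.span k (Set.range (Gf k))) :
    X k 1 * m ∈ Submodule.span k (Set.range (Gf k)) := by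
  induction hm using Submodule.span_induction with
  | mem v hv =>
    obtain ⟨j, rfl⟩ := hv
    rcases j with p | p
    · rw [Gf_inl, Ee_def, gyE]
      exact Submodule.sub_mem _ (Submodule.subset_span ⟨Sum.inr p, rfl⟩)
        (Submodule.subset_span ⟨Sum.inl (p.1 + 1, p.2), rfl⟩)
    · rw [Gf_inr, Ee_def, gyxE (rel k), gsmulAlg (k := k)]
      exact Submodule.neg_mem _
        (Submodule.smul_mem _ _ (Submodule.subset_span ⟨Sum.inl (p.1, p.2 + 1), rfl⟩))
  | zero =>
    have h : X k 1 * (0 : OddPoly k) = 0 := mul_zero _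
    rw [h]; exact Submodule.zero_mem _
  | add u v hu hv ihu ihv =>
    have h : X k 1 * (u + v) = X k 1 * u + X k 1 * v := mul_add _ _ _
    rw [h]; exact Submodule.add_mem _ ihu ihv
  | smul c v hv ihv =>
    have h : X k 1 * (c • v) = c • (X k 1 * v) := mul_smul_comm _ _ _
    rw [h]; exact Submodule.smul_mem _ _ ihv

lemma span_top : Submodule.span k (Set.range (Gf k)) = ⊤ := by
  rw [eq_top_iff]
  intro r _
  have h1 : (1 : OddPoly k) ∈ Submodule.span k (Set.range (Gf k)) :=
    Submodule.subset_span ⟨Sum.inl (0, 0), gE00⟩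
  have key : ∀ r : OddPoly k, ∀ m ∈ Submodule.span k (Set.range (Gf k)),
      r * m ∈ Submodule.span k (Set.range (Gf k)) := by
    intro r
    have hr : r ∈ Algebra.adjoin k (Set.range (X k)) := by rw [adjoin_top]; trivial
    induction hr using Algebra.adjoin_induction with
    | mem v hv =>
      obtain ⟨i, rfl⟩ := hv
      fin_cases i
      · exact fun m hm => mem_span_mul0 k m hm
      · exact fun m hm => mem_span_mul1 k m hm
    | algebraMap c =>
      intro m hm
      have h : algebraMap k (OddPoly k) c * m = c • m := (Algebra.smul_def c m).symm
      rw [h]; exact Submodule.smul_mem _ _ hm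
    | add u v hu hv ihu ihv =>
      intro m hm
      have h : (u + v) * m = u * m + v * m := add_mul _ _ _
      rw [h]; exact Submodule.add_mem _ (ihu m hm) (ihv m hm)
    | mul u v hu hv ihu ihv =>
      intro m hm
      have h : (u * v) * m = u * (v * m) := mul_assoc _ _ _
      rw [h]; exact ihu _ (ihv m hm)
  have := key r 1 h1
  rwa [mul_one] at this

noncomputable def GB : Module.Basis Ind k (OddPoly k) :=
  Module.Basis.mk (Gindep k) (by rw [span_top])

lemma GB_apply (j : Ind) : GB k j = Gf k j := Module.Basis.mk_apply _ _ j

end Stmt5Aux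

open Stmt5Aux

/-- The monomials `E₁^a · E₂^b`, `(a, b) ∈ ℕ × ℕ`, where `E₁ = x₁ - x₂`
and `E₂ = x₁x₂`, form a basis of `ker ∂` as a `k`-module. -/
theorem stmt5 (k : Type*) [CommRing k]
    (s : OddPoly k ≃ₐ[k] OddPoly k)
    (hs1 : s (X k 0) = - X k 1) (hs2 : s (X k 1) = - X k 0)
    (D : OddPoly k →ₗ[k] OddPoly k)
    (hD0 : D 1 = 0) (hD1 : D (X k 0) = 1) (hD2 : D (X k 1) = 1)
    (hDL : ∀ f g : OddPoly k, D (f * g) = D f * g + s f * D g)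
 :
    ∃ b : Module.Basis (ℕ × ℕ) k (LinearMap.ker D),
      ∀ p : ℕ × ℕ,
        (b p : OddPoly k) = (X k 0 - X k 1) ^ p.1 * (X k 0 * X k 1) ^ p.2 := by
  classical
  -- kernel computations
  have hkermul : ∀ u v : OddPoly k, D u = 0 → D v = 0 → D (u * v) = 0 := by
    intro u v hu hv
    rw [hDL, hu, hv]
    exact gz1 _ _
  have hDpow : ∀ u : OddPoly k, D u = 0 → ∀ n : ℕ, D (u ^ n) = 0 := by
    intro u hu n
    induction n with
    | zero =>
      have h : u ^ 0 = 1 := pow_zero u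
      rw [h]; exact hD0
    | succ n ih =>
      have h : u ^ (n + 1) = u ^ n * u := pow_succ u n
      rw [h]; exact hkermul _ _ ih hu
  have hDE1 : D (X k 0 - X k 1) = 0 := by rw [map_sub, hD1, hD2, sub_self]
  have hDE2 : D (X k 0 * X k 1) = 0 := by
    rw [hDL, hD1, hD2, hs1]
    exact gz2 _
  have hDE : ∀ p : ℕ × ℕ, D (Ee k p) = 0 := fun p =>
    hkermul _ _ (hDpow _ hDE1 p.1) (hDpow _ hDE2 p.2)
  have hDxE : ∀ p : ℕ × ℕ, D (X k 0 * Ee k p) = Ee k p := by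
    intro p
    rw [hDL, hD1, hDE p]
    exact gz3 _ _
  -- D in coordinates
  set Dc : OddPoly k →ₗ[k] OddPoly k :=
    (Finsupp.linearCombination k (Ee k)) ∘ₗ
      (Finsupp.lcomapDomain Sum.inr Sum.inr_injective) ∘ₗ
      ((GB k).repr : OddPoly k →ₗ[k] (Ind →₀ k)) with hDc_def
  have hDc : D = Dc := by
    apply (GB k).ext
    intro j
    have hrepr : (GB k).repr (GB k j) = Finsupp.single j 1 := (GB k).repr_self j
    rcases j with p | p
    · have hL : D (GB k (Sum.inl p)) = 0 := by rw [GB_apply, Gf_inl]; exact hDE p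
      rw [hL, hDc_def]
      simp only [LinearMap.coe_comp, Function.comp_apply, LinearEquiv.coe_coe, hrepr]
      have hcz : Finsupp.lcomapDomain (R := k) (M := k) (Sum.inr : ℕ × ℕ → Ind) Sum.inr_injective
          (Finsupp.single (Sum.inl p) 1) = 0 := by
        ext q
        simp [Finsupp.lcomapDomain, Finsupp.comapDomain_apply, Finsupp.single_apply]
      rw [hcz, map_zero]
    · have hL : D (GB k (Sum.inr p)) = Ee k p := by rw [GB_apply, Gf_inr]; exact hDxE p
      rw [hL, hDc_def]
      simp only [LinearMap.coe_comp, Function.comp_apply, LinearEquiv.coe_coe, hrepr]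
      have hcs : Finsupp.lcomapDomain (R := k) (M := k) (Sum.inr : ℕ × ℕ → Ind) Sum.inr_injective
          (Finsupp.single (Sum.inr p) 1) = Finsupp.single p 1 := by
        ext q
        simp [Finsupp.lcomapDomain, Finsupp.comapDomain_apply, Finsupp.single_apply,
          Sum.inr.injEq]
      rw [hcs, Finsupp.linearCombination_single, one_smul]
  -- the kernel is the span of the `Ee`
  have hker : LinearMap.ker D = Submodule.span k (Set.range (Ee k)) := by
    apply le_antisymm
    · intro f hf
      have hf0 : Dc f = 0 := by rw [← hDc]; exact hf
      have hz0 : Finsupp.lcomapDomain (R := k) (M := k) (Sum.inr : ℕ × ℕ → Ind) Sum.inr_injective ((GB k).repr f)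
          = 0 := by
        apply linearIndependent_iff.mp (Eindep k)
        exact hf0
      have hz : ∀ p : ℕ × ℕ, (GB k).repr f (Sum.inr p) = 0 := by
        intro p
        have := DFunLike.congr_fun hz0 p
        simpa [Finsupp.lcomapDomain, Finsupp.comapDomain_apply] using this
      have hrep := (GB k).linearCombination_repr f
      rw [← hrep, Finsupp.linearCombination_apply]
      refine Submodule.sum_mem _ (fun j hj => ?_)
      rcases j with p | p
      · exact Submodule.smul_mem _ _
          (Submodule.subset_span ⟨p, ((GB_apply k (Sum.inl p)).trans (Gf_inl k p)).symm⟩)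
      · rw [hz p]
        simpa using Submodule.zero_mem (Submodule.span k (Set.range (Ee k)))
    · rw [Submodule.span_le]
      rintro _ ⟨p, rfl⟩
      exact LinearMap.mem_ker.mpr (hDE p)
  -- build the basis of the kernel
  set Ek : ℕ × ℕ → LinearMap.ker D := fun p => ⟨Ee k p, LinearMap.mem_ker.mpr (hDE p)⟩
    with hEk_def
  have hEk_indep : LinearIndependent k Ek := by
    apply LinearIndependent.of_comp (LinearMap.ker D).subtype
    exact Eindep k
  have hEk_span : ⊤ ≤ Submodule.span k (Set.range Ek) := by
    intro v _
    have hv : (v : OddPoly k) ∈ Submodule.span k (Set.range (Ee k)) := by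
      rw [← hker]; exact v.2
    have hrange : Set.range (Ee k) = (LinearMap.ker D).subtype '' Set.range Ek := by
      rw [← Set.range_comp]; rfl
    rw [hrange, ← Submodule.map_span] at hv
    obtain ⟨w, hw, hweq⟩ := hv
    have hwv : w = v := Subtype.ext hweq
    rwa [← hwv]
  refine ⟨Module.Basis.mk hEk_indep hEk_span, fun p => ?_⟩
  rw [Module.Basis.mk_apply]
  rfl
end

section
/- For each i ∈ {1, 2}, the ring R is free of rank two as a left module over R^s = ker ∂ with basis {1, xᵢ}, and free of rank two as a right module over R^s with basis {1, xᵢ}. Concretely: every f ∈ R can be written uniquely as f = a + b·xᵢ with a, b ∈ ker ∂, and also uniquely as f = a′ + xᵢ·b′ with a′, b′ ∈ ker ∂. -/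
/-- Induction principle for `OddPoly`. -/
theorem OddPoly.induction (k : Type*) [CommRing k] (P : OddPoly k → Prop)
    (halg : ∀ r : k, P (algebraMap k (OddPoly k) r))
    (hX : ∀ i, P (X k i))
    (hmul : ∀ a b, P a → P b → P (a * b))
    (hadd : ∀ a b, P a → P b → P (a + b)) : ∀ f, P f := by
  intro f
  obtain ⟨g, rfl⟩ := RingQuot.mkAlgHom_surjective k (OddRel k) f
  induction g using FreeAlgebra.induction with
  | grade0 r => simpa using halg r
  | grade1 i => exact hX i
  | mul a b ha hb => rw [map_mul]; exact hmul _ _ ha hb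
  | add a b ha hb => rw [map_add]; exact hadd _ _ ha hb

/-- For each `i ∈ {1, 2}`, `R` is free of rank two as a left and as a
right module over `R^s = ker ∂` with basis `{1, xᵢ}`: every `f ∈ R` can be
written uniquely as `f = a + b·xᵢ` with `a, b ∈ ker ∂`, and uniquely as
`f = a' + xᵢ·b'` with `a', b' ∈ ker ∂`. -/
theorem stmt7 (k : Type*) [CommRing k]
    (s : OddPoly k ≃ₐ[k] OddPoly k)
    (hs1 : s (X k 0) = - X k 1) (hs2 : s (X k 1) = - X k 0)
    (D : OddPoly k →ₗ[k] OddPoly k)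
    (hD0 : D 1 = 0) (hD1 : D (X k 0) = 1) (hD2 : D (X k 1) = 1)
    (hDL : ∀ f g : OddPoly k, D (f * g) = D f * g + s f * D g)
 :
    ∀ i : Fin 2, ∀ f : OddPoly k,
      (∃! p : LinearMap.ker D × LinearMap.ker D,
        f = (p.1 : OddPoly k) + (p.2 : OddPoly k) * X k i) ∧
      (∃! p : LinearMap.ker D × LinearMap.ker D,
        f = (p.1 : OddPoly k) + X k i * (p.2 : OddPoly k)) := by
  have hDalg : ∀ r : k, D (algebraMap k (OddPoly k) r) = 0 := by
    intro r
    rw [Algebra.algebraMap_eq_smul_one, map_smul, hD0, smul_zero]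
  have hss : ∀ f, s (s f) = f := by
    refine OddPoly.induction k _ (fun r => by simp)
      (fun i => ?_) (fun a b ha hb => by rw [map_mul, map_mul, ha, hb])
      (fun a b ha hb => by rw [map_add, map_add, ha, hb])
    fin_cases i
    · show s (s (X k 0)) = X k 0
      rw [hs1, map_neg, hs2, neg_neg]
    · show s (s (X k 1)) = X k 1
      rw [hs2, map_neg, hs1, neg_neg]
  have hDs : ∀ f, D (s f) = - s (D f) := by
    refine OddPoly.induction k _
      (fun r => by rw [AlgEquiv.commutes, hDalg, map_zero, neg_zero])
      (fun i => ?_)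
      (fun a b ha hb => ?_) (fun a b ha hb => by
        rw [map_add, map_add, ha, hb, map_add, map_add, neg_add])
    · fin_cases i
      · show D (s (X k 0)) = - s (D (X k 0))
        rw [hs1, map_neg, hD2, hD1, map_one]
      · show D (s (X k 1)) = - s (D (X k 1))
        rw [hs2, map_neg, hD1, hD2, map_one]
    · rw [map_mul, hDL, ha, hb, hss, hDL, map_add, map_mul, map_mul, hss]
      rw [show (-s (D a) * s b : OddPoly k) = -(s (D a) * s b) by exact neg_mul (s (D a)) (s b),
        show (a * -s (D b) : OddPoly k) = -(a * s (D b)) by exact mul_neg a (s (D b)), neg_add]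
  have hDD : ∀ f, D (D f) = 0 := by
    refine OddPoly.induction k _
      (fun r => by rw [hDalg, map_zero])
      (fun i => ?_)
      (fun a b ha hb => ?_) (fun a b ha hb => by
        rw [map_add, map_add, ha, hb, add_zero])
    · fin_cases i
      · show D (D (X k 0)) = 0
        rw [hD1, hD0]
      · show D (D (X k 1)) = 0
        rw [hD2, hD0]
    · rw [hDL, map_add, hDL, hDL, ha, hb, hDs, hss, mul_zero, zero_mul,
        zero_add, add_zero]
      rw [show (-s (D a) * D b : OddPoly k) = -(s (D a) * D b) by exact neg_mul (s (D a)) (D b),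
        add_neg_cancel]
  have hsinj : Function.Injective s := s.injective
  have hDX : ∀ i : Fin 2, D (X k i) = 1 := by
    intro i; fin_cases i <;> assumption
  intro i f
  constructor
  · -- left: f = a + b * Xᵢ with b = s (D f), a = f - b * Xᵢ
    have hb : D (s (D f)) = 0 := by rw [hDs, hDD, map_zero, neg_zero]
    have hbX : D (s (D f) * X k i) = D f := by
      rw [hDL, hb, zero_mul, hss, hDX, mul_one, zero_add]
    have ha : D (f - s (D f) * X k i) = 0 := by
      rw [map_sub, hbX, sub_self]
    refine ⟨(⟨f - s (D f) * X k i, ha⟩, ⟨s (D f), hb⟩), by simp, ?_⟩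
    rintro ⟨a', b'⟩ hq
    have hDf : D f = s (b' : OddPoly k) := by
      rw [hq]
      simp [hDL, hDX, LinearMap.mem_ker.mp a'.2, LinearMap.mem_ker.mp b'.2]
    have hb' : (b' : OddPoly k) = s (D f) := by rw [hDf, hss]
    have ha' : (a' : OddPoly k) = f - s (D f) * X k i := by
      rw [← hb', hq, add_sub_cancel_right]
    exact Prod.ext (Subtype.ext ha') (Subtype.ext hb')
  · -- right: f = a' + Xᵢ * b' with b' = D f
    have hb : D (D f) = 0 := hDD f
    have hXb : D (X k i * D f) = D f := by
      rw [hDL, hDX, one_mul, hDD, mul_zero, add_zero]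
    have ha : D (f - X k i * D f) = 0 := by
      rw [map_sub, hXb, sub_self]
    refine ⟨(⟨f - X k i * D f, ha⟩, ⟨D f, hb⟩), by simp, ?_⟩
    rintro ⟨a', b'⟩ hq
    have hb' : (b' : OddPoly k) = D f := by
      rw [hq]
      simp [hDL, hDX, LinearMap.mem_ker.mp a'.2, LinearMap.mem_ker.mp b'.2]
    have ha' : (a' : OddPoly k) = f - X k i * D f := by
      rw [← hb', hq, add_sub_cancel_right]
    exact Prod.ext (Subtype.ext ha') (Subtype.ext hb')
end

section
/- For every f ∈ R, the element P(f) := f − x₂·∂(f) lies in ker ∂; hence every f ∈ R decomposes as f = P(f) + x₂·∂(f) with P(f) ∈ R^s. -/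
lemma key_lemma (k : Type*) [CommRing k]
    (s : OddPoly k ≃ₐ[k] OddPoly k)
    (hs1 : s (X k 0) = - X k 1) (hs2 : s (X k 1) = - X k 0)
    (D : OddPoly k →ₗ[k] OddPoly k)
    (hD0 : D 1 = 0) (hD1 : D (X k 0) = 1) (hD2 : D (X k 1) = 1)
    (hDL : ∀ f g : OddPoly k, D (f * g) = D f * g + s f * D g) :
    ∀ f : OddPoly k, s (s f) = f ∧ D (s f) = - s (D f) ∧ D (D f) = 0 := by
  have hone : D (s (1 : OddPoly k)) = - s (D 1) := by
    simp [hD0]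
  intro f
  obtain ⟨g, rfl⟩ := RingQuot.mkAlgHom_surjective k (OddRel k) f
  induction g using FreeAlgebra.induction with
  | grade0 r =>
      rw [AlgHom.commutes]
      have hz : D (algebraMap k (OddPoly k) r) = 0 := by
        rw [Algebra.algebraMap_eq_smul_one, map_smul, hD0, smul_zero]
      refine ⟨by simp, ?_, ?_⟩
      · rw [AlgEquiv.commutes, hz, map_zero, neg_zero]
      · rw [hz, map_zero]
  | grade1 i =>
      have h0 : s (s (X k 0)) = X k 0 := by rw [hs1, map_neg, hs2, neg_neg]
      have h0' : D (s (X k 0)) = - s (D (X k 0)) := by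
        rw [hs1, map_neg, hD2, hD1, map_one]
      have h0'' : D (D (X k 0)) = 0 := by rw [hD1, hD0]
      have h1 : s (s (X k 1)) = X k 1 := by rw [hs2, map_neg, hs1, neg_neg]
      have h1' : D (s (X k 1)) = - s (D (X k 1)) := by
        rw [hs2, map_neg, hD1, hD2, map_one]
      have h1'' : D (D (X k 1)) = 0 := by rw [hD2, hD0]
      fin_cases i
      · exact ⟨h0, h0', h0''⟩
      · exact ⟨h1, h1', h1''⟩
  | mul a b ha hb =>
      obtain ⟨ha1, ha2, ha3⟩ := ha
      obtain ⟨hb1, hb2, hb3⟩ := hb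
      rw [map_mul]
      set A := (RingQuot.mkAlgHom k (OddRel k)) a
      set B := (RingQuot.mkAlgHom k (OddRel k)) b
      refine ⟨by rw [map_mul, map_mul, ha1, hb1], ?_, ?_⟩
      · rw [map_mul, hDL, hDL, map_add, map_mul, map_mul, ha2, hb2, ha1]
        rw [show -s (D A) * s B = -(s (D A) * s B) from neg_mul (s (D A)) (s B),
          show A * -s (D B) = -(A * s (D B)) from mul_neg A (s (D B)), neg_add]
      · rw [hDL, map_add, hDL, hDL, ha3, hb3, ha2, ha1]
        rw [zero_mul, mul_zero, zero_add, add_zero,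
          show -s (D A) * D B = -(s (D A) * D B) from neg_mul (s (D A)) (D B), add_neg_cancel]
  | add a b ha hb =>
      obtain ⟨ha1, ha2, ha3⟩ := ha
      obtain ⟨hb1, hb2, hb3⟩ := hb
      rw [map_add]
      refine ⟨by rw [map_add, map_add, ha1, hb1], ?_, ?_⟩
      · rw [map_add, map_add, map_add, map_add, ha2, hb2]; rw [neg_add]
      · rw [map_add, map_add, ha3, hb3, add_zero]

/-- For every `f ∈ R`, the element `P(f) = f - x₂·∂(f)` lies in `ker ∂`;
hence `f = P(f) + x₂·∂(f)` with `P(f) ∈ R^s`. -/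
theorem stmt8 (k : Type*) [CommRing k]
    (s : OddPoly k ≃ₐ[k] OddPoly k)
    (hs1 : s (X k 0) = - X k 1) (hs2 : s (X k 1) = - X k 0)
    (D : OddPoly k →ₗ[k] OddPoly k)
    (hD0 : D 1 = 0) (hD1 : D (X k 0) = 1) (hD2 : D (X k 1) = 1)
    (hDL : ∀ f g : OddPoly k, D (f * g) = D f * g + s f * D g)
 :
    ∀ f : OddPoly k,
      (f - X k 1 * D f) ∈ LinearMap.ker D ∧
      f = (f - X k 1 * D f) + X k 1 * D f := by
  intro f
  obtain ⟨-, -, hDD⟩ := key_lemma k s hs1 hs2 D hD0 hD1 hD2 hDL f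
  constructor
  · rw [LinearMap.mem_ker, map_sub, hDL, hD2, hDD, mul_zero, add_zero, one_mul, sub_self]
  · rw [sub_add_cancel]
end

section
/- Assume 2 is a non-zero-divisor in k. Then the monomials x₁^(2a) · x₂^(2b), indexed by pairs (a, b) ∈ ℕ × ℕ, form a basis of the center of R as a k-module. (In particular the center Z(R) is isomorphic to a polynomial ring k[x₁², x₂²], and its graded dimension, with deg xᵢ = 2, is 1/(1 − q⁴)².) -/
/-! The ordered monomials `x₁ᵃ x₂ᵇ` are linearly independent because `R` acts on `k[ℕ × ℕ]`,
`x₁` shifting the first index and `x₂` the second with the sign `(-1)ᵃ`, so that `x₁ᵃ x₂ᵇ`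
sends `δ₀` to `δ_(a,b)`. In this basis `xᵖ xᵠ = (-1)^(p₂q₁) xᵖ⁺ᵠ`, so the commutator with
`x₁` (resp. `x₂`) multiplies the coefficient of `xᵖ` by `1 - (-1)^p₂` (resp. `(-1)^p₁ - 1`),
which is `±2` when that exponent is odd. Hence a central element only involves monomials with
both exponents even, and those are central. -/

lemma Module.Basis.repr_apply_apply_of_apply_eq_smul {ι R M : Type*} [CommSemiring R]
    [AddCommMonoid M] [Module R M] (b : Module.Basis ι R M) {f : M →ₗ[R] M} {w : ι → R}
    {g : ι → ι} (hg : Function.Injective g) (hf : ∀ i, f (b i) = w i • b (g i))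
    (x : M) (i : ι) :
    b.repr (f x) (g i) = w i * b.repr x i := by
  have h : Finsupp.lapply (g i) ∘ₗ b.repr.toLinearMap ∘ₗ f =
      w i • (Finsupp.lapply i ∘ₗ b.repr.toLinearMap) :=
    b.ext fun j => by
      by_cases hji : j = i
      · simp [hf, hji]
      · simp [hf, hg.ne hji, Ne.symm hji]
  exact LinearMap.congr_fun h x

namespace OddPoly

variable (k : Type*) [CommRing k]

noncomputable def monomial (p : ℕ × ℕ) : OddPoly k := X k 0 ^ p.1 * X k 1 ^ p.2

lemma X_one_mul_X_zero : X k 1 * X k 0 = (-1 : k) • (X k 0 * X k 1) := by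
  have h := RingQuot.mkAlgHom_rel k (OddRel.anticomm (k := k))
  rw [map_add, map_mul, map_mul, map_zero] at h
  rw [neg_one_smul k (X k 0 * X k 1)]
  exact eq_neg_of_add_eq_zero_left (by rwa [add_comm] at h)

lemma X_one_pow_mul_X_zero (b : ℕ) :
    X k 1 ^ b * X k 0 = (-1 : k) ^ b • (X k 0 * X k 1 ^ b) := by
  induction b with
  | zero => simp
  | succ n ih =>
    rw [pow_succ', mul_assoc, ih, mul_smul_comm, ← mul_assoc, X_one_mul_X_zero, smul_mul_assoc,
      smul_smul, mul_assoc, ← pow_succ', ← pow_succ]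

lemma X_one_pow_mul_X_zero_pow (b a : ℕ) :
    X k 1 ^ b * X k 0 ^ a = (-1 : k) ^ (b * a) • (X k 0 ^ a * X k 1 ^ b) := by
  induction a with
  | zero => simp
  | succ n ih =>
    rw [pow_succ, ← mul_assoc, ih, smul_mul_assoc, mul_assoc, X_one_pow_mul_X_zero,
      mul_smul_comm, smul_smul, ← pow_add, ← mul_assoc, ← pow_succ, mul_add_one]

lemma monomial_mul_monomial (p q : ℕ × ℕ) :
    monomial k p * monomial k q = (-1 : k) ^ (p.2 * q.1) • monomial k (p + q) := by
  simp only [monomial, Prod.fst_add, Prod.snd_add, pow_add]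
  rw [mul_assoc, ← mul_assoc (X k 1 ^ p.2), X_one_pow_mul_X_zero_pow]
  simp only [smul_mul_assoc, mul_smul_comm, mul_assoc]

open Finsupp in
noncomputable def shiftX : Module.End k ((ℕ × ℕ) →₀ k) :=
  lmapDomain k k fun p => (p.1 + 1, p.2)

open Finsupp in
noncomputable def shiftY : Module.End k ((ℕ × ℕ) →₀ k) :=
  lsum k fun p => (-1 : k) ^ p.1 • lsingle (p.1, p.2 + 1)

lemma shiftX_single (p : ℕ × ℕ) (c : k) :
    shiftX k (Finsupp.single p c) = Finsupp.single (p.1 + 1, p.2) c := by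
  simp [shiftX]

lemma shiftY_single (p : ℕ × ℕ) (c : k) :
    shiftY k (Finsupp.single p c) = (-1 : k) ^ p.1 • Finsupp.single (p.1, p.2 + 1) c := by
  simp [shiftY]

lemma shiftX_mul_shiftY_add_shiftY_mul_shiftX : shiftX k * shiftY k + shiftY k * shiftX k = 0 := by
  ext p : 2
  simp [shiftX_single, shiftY_single, pow_succ]

noncomputable def rep : OddPoly k →ₐ[k] Module.End k ((ℕ × ℕ) →₀ k) :=
  RingQuot.liftAlgHom k ⟨FreeAlgebra.lift k ![shiftX k, shiftY k], by
    rintro _ _ ⟨⟩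
    simpa using shiftX_mul_shiftY_add_shiftY_mul_shiftX k⟩

lemma rep_X (i : Fin 2) : rep k (X k i) = ![shiftX k, shiftY k] i := by
  simp [rep, X]

lemma rep_monomial_single_zero (p : ℕ × ℕ) :
    rep k (monomial k p) (Finsupp.single 0 1) = Finsupp.single p 1 := by
  have hY (b : ℕ) : (shiftY k ^ b) (Finsupp.single 0 1) = Finsupp.single (0, b) 1 := by
    induction b with
    | zero => rfl
    | succ n ih => rw [pow_succ', Module.End.mul_apply, ih, shiftY_single]; simp
  have hX (a b : ℕ) : (shiftX k ^ a) (Finsupp.single (0, b) 1) = Finsupp.single (a, b) 1 := by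
    induction a with
    | zero => rfl
    | succ n ih => rw [pow_succ', Module.End.mul_apply, ih, shiftX_single]
  simp [monomial, rep_X, hY, hX]

lemma linearIndependent_monomial : LinearIndependent k (monomial k) := by
  refine .of_comp (LinearMap.applyₗ (Finsupp.single 0 1) ∘ₗ (rep k).toLinearMap) ?_
  convert Finsupp.linearIndependent_single_one k (ℕ × ℕ) using 1
  ext1 p
  exact rep_monomial_single_zero k p

lemma mul_mem_span_monomial {x y : OddPoly k}
    (hx : x ∈ Submodule.span k (Set.range (monomial k)))
    (hy : y ∈ Submodule.span k (Set.range (monomial k))) :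
    x * y ∈ Submodule.span k (Set.range (monomial k)) := by
  have hxy := Submodule.mul_mem_mul hx hy
  rw [Submodule.span_mul_span] at hxy
  refine Submodule.span_le.mpr ?_ hxy
  rintro _ ⟨_, ⟨p, rfl⟩, _, ⟨q, rfl⟩, rfl⟩
  dsimp only
  rw [monomial_mul_monomial]
  exact Submodule.smul_mem _ _ (Submodule.subset_span ⟨p + q, rfl⟩)

lemma span_monomial : Submodule.span k (Set.range (monomial k)) = ⊤ := by
  refine Submodule.eq_top_iff'.mpr fun y => ?_
  obtain ⟨f, rfl⟩ := RingQuot.mkAlgHom_surjective k (OddRel k) y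
  induction f using FreeAlgebra.induction with
  | grade0 r =>
    rw [AlgHom.commutes, Algebra.algebraMap_eq_smul_one]
    exact Submodule.smul_mem _ _ (Submodule.subset_span ⟨0, by simp [monomial]⟩)
  | grade1 i =>
    fin_cases i
    · exact Submodule.subset_span ⟨(1, 0), by simp [monomial, X]⟩
    · exact Submodule.subset_span ⟨(0, 1), by simp [monomial, X]⟩
  | mul f g hf hg => rw [map_mul]; exact mul_mem_span_monomial k hf hg
  | add f g hf hg => rw [map_add]; exact Submodule.add_mem _ hf hg

noncomputable def monomialBasis : Module.Basis (ℕ × ℕ) k (OddPoly k) :=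
  .mk (linearIndependent_monomial k) (span_monomial k).ge

@[simp]
lemma monomialBasis_apply (p : ℕ × ℕ) : monomialBasis k p = monomial k p :=
  Module.Basis.mk_apply _ _ _

lemma monomial_mul_sub_mul_monomial (q p : ℕ × ℕ) :
    monomial k q * monomial k p - monomial k p * monomial k q =
      ((-1 : k) ^ (q.2 * p.1) - (-1 : k) ^ (p.2 * q.1)) • monomial k (p + q) := by
  rw [monomial_mul_monomial, monomial_mul_monomial, add_comm q]
  exact (sub_smul _ _ (monomial k (p + q))).symm

lemma repr_monomial_mul_sub_mul_monomial (q : ℕ × ℕ) (z : OddPoly k) (p : ℕ × ℕ) :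
    (monomialBasis k).repr (monomial k q * z - z * monomial k q) (p + q) =
      ((-1 : k) ^ (q.2 * p.1) - (-1 : k) ^ (p.2 * q.1)) * (monomialBasis k).repr z p := by
  have h := (monomialBasis k).repr_apply_apply_of_apply_eq_smul
    (f := LinearMap.mulLeft k (monomial k q) - LinearMap.mulRight k (monomial k q))
    (w := fun p => (-1 : k) ^ (q.2 * p.1) - (-1 : k) ^ (p.2 * q.1)) (add_left_injective q)
    (fun p => by simpa using monomial_mul_sub_mul_monomial k q p) z p
  simpa using h

lemma monomial_mem_center {p : ℕ × ℕ} (hp₁ : Even p.1) (hp₂ : Even p.2) :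
    monomial k p ∈ Subalgebra.center k (OddPoly k) := by
  have h : LinearMap.mulRight k (monomial k p) = LinearMap.mulLeft k (monomial k p) :=
    (monomialBasis k).ext fun q => by
      simp [monomial_mul_monomial, (hp₁.mul_left q.2).neg_one_pow,
        (hp₂.mul_right q.1).neg_one_pow, add_comm q]
  exact Subalgebra.mem_center_iff.mpr fun y => LinearMap.congr_fun h y

lemma repr_eq_zero_of_mem_center (h2 : ∀ a : k, 2 * a = 0 → a = 0) {z : OddPoly k}
    (hz : z ∈ Subalgebra.center k (OddPoly k)) {p : ℕ × ℕ} (hp : Odd p.1 ∨ Odd p.2) :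
    (monomialBasis k).repr z p = 0 := by
  have hcomm (q : ℕ × ℕ) : monomial k q * z - z * monomial k q = 0 := by
    rw [Subalgebra.mem_center_iff.mp hz, sub_self]
  rcases hp with hp | hp
  · have h := repr_monomial_mul_sub_mul_monomial k (0, 1) z p
    norm_num [hcomm, hp.neg_one_pow] at h
    exact h2 _ (by linear_combination h)
  · have h := repr_monomial_mul_sub_mul_monomial k (1, 0) z p
    norm_num [hcomm, hp.neg_one_pow] at h
    exact h2 _ (by linear_combination -h)

lemma center_eq_span_monomialBasis_even (h2 : ∀ a : k, 2 * a = 0 → a = 0) :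
    Subalgebra.toSubmodule (Subalgebra.center k (OddPoly k)) =
      Submodule.span k (monomialBasis k '' {p | Even p.1 ∧ Even p.2}) := by
  refine le_antisymm (fun z hz => ?_) (Submodule.span_le.mpr ?_)
  · refine (monomialBasis k).mem_span_image.mpr fun p hp => ?_
    by_contra hodd
    simp only [Set.mem_ofPred_eq, ← Nat.not_odd_iff_even, ← not_or, not_not] at hodd
    exact Finsupp.mem_support_iff.mp hp (repr_eq_zero_of_mem_center k h2 hz hodd)
  · rintro _ ⟨p, ⟨hp₁, hp₂⟩, rfl⟩
    rw [monomialBasis_apply]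
    exact monomial_mem_center k hp₁ hp₂

end OddPoly

/-- If `2` is a non-zero-divisor in `k`, the monomials `x₁^(2a) · x₂^(2b)`,
`(a, b) ∈ ℕ × ℕ`, form a basis of the center of `R` as a `k`-module. -/
theorem stmt10 (k : Type*) [CommRing k]
    (h2 : ∀ a : k, 2 * a = 0 → a = 0) :
    ∃ b : Module.Basis (ℕ × ℕ) k (Subalgebra.center k (OddPoly k)),
      ∀ p : ℕ × ℕ,
        (b p : OddPoly k) = X k 0 ^ (2 * p.1) * X k 1 ^ (2 * p.2) := by
  let double : ℕ × ℕ → ℕ × ℕ := fun p => (2 * p.1, 2 * p.2)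
  have hdouble : Function.Injective double := fun p q h => by
    simp only [double, Prod.mk.injEq, mul_right_inj' two_ne_zero] at h
    exact Prod.ext h.1 h.2
  have hrange : Set.range (OddPoly.monomialBasis k ∘ double) =
      OddPoly.monomialBasis k '' {p | Even p.1 ∧ Even p.2} := by
    rw [Set.range_comp]
    congr 1
    ext ⟨a, b⟩
    simp [double, even_iff_two_dvd, dvd_iff_exists_eq_mul_right, eq_comm]
  have hspan := (congrArg (Submodule.span k) hrange).trans
    (OddPoly.center_eq_span_monomialBasis_even k h2).symm
  have hli := (OddPoly.monomialBasis k).linearIndependent.comp double hdouble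
  refine ⟨(Module.Basis.span hli).map
    ((LinearEquiv.ofEq _ _ hspan).trans (Subalgebra.toSubmoduleEquiv _)), fun p => ?_⟩
  simp only [Module.Basis.map_apply, Module.Basis.span_apply, Function.comp_apply,
    OddPoly.monomialBasis_apply, OddPoly.monomial, double]
  rfl
end

section
/- The family of monomials x₁^a · x₂^b, indexed by pairs (a, b) ∈ ℕ × ℕ, is a basis of R as a k-module. -/
section Aux
variable (k : Type*) [CommRing k]

noncomputable abbrev Vmod := (ℕ × ℕ) →₀ k

/-- shift in first coordinate -/
noncomputable def T1 : Module.End k (Vmod k) :=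
  Finsupp.lsum k fun p => (Finsupp.lsingle (p.1 + 1, p.2) : k →ₗ[k] Vmod k)

/-- signed shift in second coordinate -/
noncomputable def T2 : Module.End k (Vmod k) :=
  Finsupp.lsum k fun p => ((-1 : k) ^ p.1 • Finsupp.lsingle (p.1, p.2 + 1) : k →ₗ[k] Vmod k)

lemma T1_single (a b : ℕ) (r : k) :
    T1 k (Finsupp.single (a, b) r) = Finsupp.single (a + 1, b) r := by
  simp [T1]

lemma T2_single (a b : ℕ) (r : k) :
    T2 k (Finsupp.single (a, b) r) = (-1 : k) ^ a • Finsupp.single (a, b + 1) r := by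
  simp [T2]

lemma T_anticomm : T1 k * T2 k + T2 k * T1 k = 0 := by
  apply Finsupp.lhom_ext
  rintro ⟨a, b⟩ r
  rw [LinearMap.add_apply, Module.End.mul_apply, Module.End.mul_apply, T2_single, T1_single,
    map_smul, T1_single, T2_single, LinearMap.zero_apply, pow_succ, mul_neg_one, neg_smul,
    add_neg_cancel]

noncomputable def φ : FreeAlgebra k (Fin 2) →ₐ[k] Module.End k (Vmod k) :=
  FreeAlgebra.lift k ![T1 k, T2 k]

lemma φ_rel : ∀ ⦃x y⦄, OddRel k x y → φ k x = φ k y := by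
  rintro _ _ ⟨⟩
  simp only [map_add, map_mul, map_zero, φ, FreeAlgebra.lift_ι_apply]
  simpa using T_anticomm k

noncomputable def ψ : OddPoly k →ₐ[k] Module.End k (Vmod k) :=
  RingQuot.liftAlgHom k ⟨φ k, φ_rel k⟩

lemma ψ_X (i : Fin 2) : ψ k (X k i) = ![T1 k, T2 k] i := by
  rw [X, ψ, RingQuot.liftAlgHom_mkAlgHom_apply]
  simp [φ]

noncomputable def ev : OddPoly k →ₗ[k] Vmod k :=
  { toFun := fun z => ψ k z (Finsupp.single (0, 0) 1)
    map_add' := fun x y => by simp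
    map_smul' := fun c x => by simp }

lemma T2_pow (b : ℕ) : ((T2 k) ^ b) (Finsupp.single ((0 : ℕ), (0 : ℕ)) (1 : k))
    = Finsupp.single (0, b) 1 := by
  induction b with
  | zero => simp
  | succ n ih => rw [pow_succ', Module.End.mul_apply, ih, T2_single]; simp

lemma T1_pow (a b : ℕ) : ((T1 k) ^ a) (Finsupp.single ((0 : ℕ), b) (1 : k))
    = Finsupp.single (a, b) 1 := by
  induction a with
  | zero => simp
  | succ n ih => rw [pow_succ', Module.End.mul_apply, ih, T1_single]

lemma ev_monomial (p : ℕ × ℕ) :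
    ev k (X k 0 ^ p.1 * X k 1 ^ p.2) = Finsupp.single p 1 := by
  obtain ⟨a, b⟩ := p
  simp only [ev, LinearMap.coe_mk, AddHom.coe_mk, map_mul, map_pow, ψ_X]
  simp only [Matrix.cons_val_zero, Matrix.cons_val_one, Matrix.head_cons,
    Module.End.mul_apply]
  rw [T2_pow, T1_pow]

lemma X_anticomm : X k 0 * X k 1 + X k 1 * X k 0 = 0 := by
  have := RingQuot.mkAlgHom_rel k (OddRel.anticomm (k := k))
  simpa [X, map_add, map_mul] using this

lemma neg_one_smul' (y : OddPoly k) : (-1 : k) • y + y = 0 := by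
  nth_rewrite 2 [← one_smul k y]
  rw [← add_smul, neg_add_cancel, zero_smul]

lemma X10 : X k 1 * X k 0 = (-1 : k) • (X k 0 * X k 1) := by
  have h1 : X k 1 * X k 0 + X k 0 * X k 1 = 0 := by
    rw [add_comm]; exact X_anticomm k
  have h2 := neg_one_smul' k (X k 0 * X k 1)
  exact add_right_cancel (h1.trans h2.symm)

lemma Xpow_comm (b : ℕ) :
    X k 1 ^ b * X k 0 = ((-1 : k) ^ b) • (X k 0 * X k 1 ^ b) := by
  induction b with
  | zero => simp
  | succ n ih =>
    rw [pow_succ, mul_assoc, X10, mul_smul_comm, ← mul_assoc, ih, smul_mul_assoc, smul_smul,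
      ← pow_succ', pow_succ, mul_assoc]

lemma Xpow_pow_comm (b c : ℕ) :
    X k 1 ^ b * X k 0 ^ c = ((-1 : k) ^ (b * c)) • (X k 0 ^ c * X k 1 ^ b) := by
  induction c with
  | zero => simp
  | succ n ih =>
    rw [pow_succ, ← mul_assoc, ih, smul_mul_assoc, mul_assoc, Xpow_comm, mul_smul_comm,
      smul_smul, ← pow_add, ← mul_assoc, Nat.mul_succ]

end Aux

/-- The monomials `x₁^a · x₂^b`, `(a, b) ∈ ℕ × ℕ`, form a basis of `R` as
a `k`-module. -/
theorem stmt14 (k : Type*) [CommRing k] :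
    ∃ b : Module.Basis (ℕ × ℕ) k (OddPoly k),
      ∀ p : ℕ × ℕ, b p = X k 0 ^ p.1 * X k 1 ^ p.2 := by
  set v : ℕ × ℕ → OddPoly k := fun p => X k 0 ^ p.1 * X k 1 ^ p.2 with hv
  have hcomp : ev k ∘ v = fun p => Finsupp.single p 1 := by
    funext p; exact ev_monomial k p
  have hli : LinearIndependent k v := by
    apply LinearIndependent.of_comp (ev k)
    rw [hcomp]
    exact (Finsupp.basisSingleOne : Module.Basis (ℕ × ℕ) k (Vmod k)).linearIndependent
  have hmul : ∀ p q : ℕ × ℕ, v p * v q ∈ Submodule.span k (Set.range v) := by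
    rintro ⟨a, b⟩ ⟨c, d⟩
    have : v (a, b) * v (c, d) = ((-1 : k) ^ (b * c)) • v (a + c, b + d) := by
      simp only [hv]
      rw [mul_assoc, ← mul_assoc (X k 1 ^ b), Xpow_pow_comm, smul_mul_assoc, mul_smul_comm]
      rw [← mul_assoc, ← mul_assoc, ← pow_add, mul_assoc, ← pow_add]
    rw [this]
    exact Submodule.smul_mem _ _ (Submodule.subset_span ⟨(a + c, b + d), rfl⟩)
  have hspan : ⊤ ≤ Submodule.span k (Set.range v) := by
    intro z hzt
    have hz : z ∈ Algebra.adjoin k (Set.range (X k)) := by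
      have : Algebra.adjoin k (Set.range (X k)) = ⊤ := by
        have h1 : Set.range (X k) =
            (RingQuot.mkAlgHom k (OddRel k)) '' Set.range (FreeAlgebra.ι k) := by
          rw [← Set.range_comp]; rfl
        rw [h1, ← AlgHom.map_adjoin, FreeAlgebra.adjoin_range_ι, Algebra.map_top,
          AlgHom.range_eq_top]
        exact RingQuot.mkAlgHom_surjective k (OddRel k)
      rw [this]; trivial
    clear hzt
    induction hz using Algebra.adjoin_induction with
    | mem x hx =>
      obtain ⟨i, rfl⟩ := hx
      fin_cases i
      · show X k 0 ∈ _
        have : X k 0 = v (1, 0) := by simp [hv]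
        rw [this]; exact Submodule.subset_span ⟨(1, 0), rfl⟩
      · show X k 1 ∈ _
        have : X k 1 = v (0, 1) := by simp [hv]
        rw [this]; exact Submodule.subset_span ⟨(0, 1), rfl⟩
    | algebraMap r =>
      have : (algebraMap k (OddPoly k)) r = r • v (0, 0) := by
        simp [hv, Algebra.algebraMap_eq_smul_one]
      rw [this]
      exact Submodule.smul_mem _ _ (Submodule.subset_span ⟨(0, 0), rfl⟩)
    | add x y _ _ hx hy => exact Submodule.add_mem _ hx hy
    | mul x y hxa hya hx hy =>
      clear hxa hya
      induction hx using Submodule.span_induction with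
      | mem a ha =>
        obtain ⟨p, rfl⟩ := ha
        induction hy using Submodule.span_induction with
        | mem b hb => obtain ⟨q, rfl⟩ := hb; exact hmul p q
        | zero => simpa using Submodule.zero_mem _
        | add b c _ _ hb hc => rw [mul_add]; exact Submodule.add_mem _ hb hc
        | smul r b _ hb => rw [mul_smul_comm]; exact Submodule.smul_mem _ _ hb
      | zero => simpa using Submodule.zero_mem _
      | add a b _ _ ha hb => rw [add_mul]; exact Submodule.add_mem _ ha hb
      | smul r a _ ha => rw [smul_mul_assoc]; exact Submodule.smul_mem _ _ ha
  refine ⟨Module.Basis.mk hli hspan, fun p => ?_⟩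
  rw [Module.Basis.mk_apply]
end

section
/- There exists a unique k-linear map ∂₁ : R₃ → R₃ with ∂₁(1) = 0, ∂₁(x₁) = ∂₁(x₂) = 1, ∂₁(x₃) = 0, satisfying the twisted Leibniz rule ∂₁(fg) = ∂₁(f)g + s₁(f)∂₁(g) for all f, g ∈ R₃; and there exists a unique k-linear map ∂₂ : R₃ → R₃ with ∂₂(1) = 0, ∂₂(x₂) = ∂₂(x₃) = 1, ∂₂(x₁) = 0, satisfying ∂₂(fg) = ∂₂(f)g + s₂(f)∂₂(g) for all f, g ∈ R₃. -/
/-- The anticommutation relations `xᵢxⱼ + xⱼxᵢ = 0` (for `i < j`) on the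
free `k`-algebra on three generators. -/
inductive OddRel3 (k : Type*) [CommRing k] :
    FreeAlgebra k (Fin 3) → FreeAlgebra k (Fin 3) → Prop
  | anticomm (i j : Fin 3) (h : i < j) : OddRel3 k
      (FreeAlgebra.ι k i * FreeAlgebra.ι k j + FreeAlgebra.ι k j * FreeAlgebra.ι k i) 0

/-- The `k`-algebra of skew polynomials in three variables,
`R₃ = k⟨x₁,x₂,x₃⟩/(xᵢxⱼ + xⱼxᵢ, i < j)`. -/
abbrev OddPoly3 (k : Type*) [CommRing k] := RingQuot (OddRel3 k)

/-- The generators `x₁ = Y k 0`, `x₂ = Y k 1`, `x₃ = Y k 2` of `R₃`. -/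
noncomputable def Y (k : Type*) [CommRing k] (i : Fin 3) : OddPoly3 k :=
  RingQuot.mkAlgHom k (OddRel3 k) (FreeAlgebra.ι k i)

section Aux
variable {k : Type*} [CommRing k]

lemma Y_anticomm (k : Type*) [CommRing k] {i j : Fin 3} (h : i < j) :
    Y k i * Y k j + Y k j * Y k i = 0 := by
  have := RingQuot.mkAlgHom_rel k (OddRel3.anticomm (k := k) i j h)
  simpa [Y, map_add, map_mul] using this

/-- Existence: a twisted derivation with prescribed values on generators. -/
lemma exists_tder (s : OddPoly3 k →ₐ[k] OddPoly3 k) (d : Fin 3 → OddPoly3 k)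
    (hc : ∀ i j : Fin 3, i < j →
      d i * Y k j + s (Y k i) * d j + (d j * Y k i + s (Y k j) * d i) = 0) :
    ∃ D : OddPoly3 k →ₗ[k] OddPoly3 k, D 1 = 0 ∧ (∀ i, D (Y k i) = d i) ∧
      ∀ f g, D (f * g) = D f * g + s f * D g := by
  classical
  let φ : FreeAlgebra k (Fin 3) →ₐ[k] Matrix (Fin 2) (Fin 2) (OddPoly3 k) :=
    FreeAlgebra.lift k (fun i => !![Y k i, 0; d i, s (Y k i)])
  have hrel : ∀ ⦃x y⦄, OddRel3 k x y → φ x = φ y := by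
    rintro x y ⟨i, j, hij⟩
    have h1 : Y k i * Y k j + Y k j * Y k i = 0 := Y_anticomm k hij
    have h2 : s (Y k i) * s (Y k j) + s (Y k j) * s (Y k i) = 0 := by
      rw [← map_mul, ← map_mul, ← map_add, h1, map_zero]
    have h3 := hc i j hij
    simp only [map_add, map_mul, map_zero, φ, FreeAlgebra.lift_ι_apply]
    ext a b
    fin_cases a <;> fin_cases b <;>
      simp [Matrix.mul_apply, Fin.sum_univ_two, Matrix.add_apply, h1, h2, h3]
  let Ψ : OddPoly3 k →ₐ[k] Matrix (Fin 2) (Fin 2) (OddPoly3 k) := RingQuot.liftAlgHom k ⟨φ, hrel⟩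
  have hΨY : ∀ i, Ψ (Y k i) = !![Y k i, 0; d i, s (Y k i)] := fun i => by
    simp [Ψ, Y, RingQuot.liftAlgHom_mkAlgHom_apply, φ]
  -- structure of Ψ
  have hstruct : ∀ f : OddPoly3 k, Ψ f 0 0 = f ∧ Ψ f 0 1 = 0 ∧ Ψ f 1 1 = s f := by
    intro f
    obtain ⟨a, rfl⟩ := RingQuot.mkAlgHom_surjective k (OddRel3 k) f
    induction a with
    | grade0 r =>
        rw [AlgHom.commutes, AlgHom.commutes, AlgHom.commutes]
        refine ⟨?_, ?_, ?_⟩ <;> simp [Matrix.algebraMap_matrix_apply]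
    | grade1 i =>
        rw [show (RingQuot.mkAlgHom k (OddRel3 k)) (FreeAlgebra.ι k i) = Y k i from rfl, hΨY i]
        simp
    | mul a b ha hb =>
        obtain ⟨ha1, ha2, ha3⟩ := ha
        obtain ⟨hb1, hb2, hb3⟩ := hb
        rw [map_mul, map_mul, map_mul]
        refine ⟨?_, ?_, ?_⟩ <;>
          simp [Matrix.mul_apply, Fin.sum_univ_two, ha1, ha2, ha3, hb1, hb2, hb3]
    | add a b ha hb =>
        obtain ⟨ha1, ha2, ha3⟩ := ha
        obtain ⟨hb1, hb2, hb3⟩ := hb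
        rw [map_add, map_add, map_add]
        refine ⟨?_, ?_, ?_⟩ <;> simp [Matrix.add_apply, ha1, ha2, ha3, hb1, hb2, hb3]
  refine ⟨{ toFun := fun f => Ψ f 1 0,
            map_add' := fun f g => by simp only [map_add, Matrix.add_apply],
            map_smul' := fun c f => by
              simp only [map_smul, Matrix.smul_apply, RingHom.id_apply] }, ?_, ?_, ?_⟩
  · simp only [LinearMap.coe_mk, AddHom.coe_mk, map_one]
    simp [Matrix.one_apply]
  · intro i; simp [hΨY i]
  · intro f g
    simp only [LinearMap.coe_mk, AddHom.coe_mk, map_mul]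
    rw [Matrix.mul_apply, Fin.sum_univ_two, (hstruct g).1, (hstruct f).2.2]

lemma tder_unique (s : OddPoly3 k →ₐ[k] OddPoly3 k)
    (D D' : OddPoly3 k →ₗ[k] OddPoly3 k)
    (h1 : D 1 = 0) (h1' : D' 1 = 0)
    (hY : ∀ i, D (Y k i) = D' (Y k i))
    (hL : ∀ f g, D (f * g) = D f * g + s f * D g)
    (hL' : ∀ f g, D' (f * g) = D' f * g + s f * D' g) : D = D' := by
  ext f
  obtain ⟨a, rfl⟩ := RingQuot.mkAlgHom_surjective k (OddRel3 k) f
  induction a with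
  | grade0 r =>
      rw [AlgHom.commutes]
      rw [Algebra.algebraMap_eq_smul_one, map_smul, map_smul, h1, h1']
  | grade1 i => exact hY i
  | mul a b ha hb => rw [map_mul, hL, hL', ha, hb]
  | add a b ha hb => rw [map_add, map_add, map_add, ha, hb]

end Aux

/-- There exist unique `k`-linear odd Demazure operators `∂₁` and `∂₂` on
`R₃`: `∂₁1 = 0`, `∂₁x₁ = ∂₁x₂ = 1`, `∂₁x₃ = 0`, with the twisted Leibniz
rule for `s₁`; and `∂₂1 = 0`, `∂₂x₂ = ∂₂x₃ = 1`, `∂₂x₁ = 0`, with the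
twisted Leibniz rule for `s₂`. -/
theorem stmt16 (k : Type*) [CommRing k]
    (s₁ : OddPoly3 k ≃ₐ[k] OddPoly3 k)
    (hs₁1 : s₁ (Y k 0) = - Y k 1) (hs₁2 : s₁ (Y k 1) = - Y k 0)
    (hs₁3 : s₁ (Y k 2) = - Y k 2)
    (s₂ : OddPoly3 k ≃ₐ[k] OddPoly3 k)
    (hs₂1 : s₂ (Y k 0) = - Y k 0) (hs₂2 : s₂ (Y k 1) = - Y k 2)
    (hs₂3 : s₂ (Y k 2) = - Y k 1)
 :
    (∃! D : OddPoly3 k →ₗ[k] OddPoly3 k,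
      D 1 = 0 ∧ D (Y k 0) = 1 ∧ D (Y k 1) = 1 ∧ D (Y k 2) = 0 ∧
      ∀ f g : OddPoly3 k, D (f * g) = D f * g + s₁ f * D g) ∧
    (∃! D : OddPoly3 k →ₗ[k] OddPoly3 k,
      D 1 = 0 ∧ D (Y k 1) = 1 ∧ D (Y k 2) = 1 ∧ D (Y k 0) = 0 ∧
      ∀ f g : OddPoly3 k, D (f * g) = D f * g + s₂ f * D g) := by
  constructor
  · obtain ⟨D, hD1, hDY, hDL⟩ := exists_tder (s₁ : OddPoly3 k →ₐ[k] OddPoly3 k)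
      (fun i => if i = 2 then 0 else 1)
      (by
        intro i j hij
        fin_cases i <;> fin_cases j <;> simp_all)
    refine ⟨D, ⟨hD1, by simpa using hDY 0, by simpa using hDY 1, by simpa using hDY 2, hDL⟩, ?_⟩
    rintro D' ⟨h1', hY0', hY1', hY2', hL'⟩
    refine tder_unique (s₁ : OddPoly3 k →ₐ[k] OddPoly3 k) D' D h1' hD1 ?_ hL' hDL
    intro i
    fin_cases i <;> simp_all
  · obtain ⟨D, hD1, hDY, hDL⟩ := exists_tder (s₂ : OddPoly3 k →ₐ[k] OddPoly3 k)
      (fun i => if i = 0 then 0 else 1)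
      (by
        intro i j hij
        fin_cases i <;> fin_cases j <;> simp_all)
    refine ⟨D, ⟨hD1, by simpa using hDY 1, by simpa using hDY 2, by simpa using hDY 0, hDL⟩, ?_⟩
    rintro D' ⟨h1', hY1', hY2', hY0', hL'⟩
    refine tder_unique (s₂ : OddPoly3 k →ₐ[k] OddPoly3 k) D' D h1' hD1 ?_ hL' hDL
    intro i
    fin_cases i <;> simp_all
end

section
/- The kernel of ∂₁ is a k-subalgebra of R₃, equal to the k-subalgebra of R₃ generated by the three elements x₁ − x₂, x₁x₂, and x₃. -/
section AuxRingLemmas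

variable {R : Type*} [Ring R]

private lemma gl1 (a b c d : R) : -a * b + c * -d = -(a * b + c * d) := by noncomm_ring

private lemma gl2 (a b c d : R) : 0 * b + a * c + (-a * c + d * 0) = 0 := by noncomm_ring

private lemma gl3 (a : R) : 1 * a + -a * 1 = 0 := by noncomm_ring

private lemma gl4 (x y : R) (h : y * x = -(x * y)) :
    (x - y) * x - x * (x - y) = x * y + x * y := by
  rw [sub_mul, mul_sub, h]; noncomm_ring

private lemma gl5 (a b : R) : b - a * 1 = -(a - b) := by noncomm_ring

private lemma gl6 (a : R) : a - a * 1 = 0 := by noncomm_ring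

private lemma gl7 (a b : R) : a - b * 0 = a := by noncomm_ring

private lemma gl8 (f g b d x : R) :
    f + g - x * (b + d) = (f - x * b) + (g - x * d) := by noncomm_ring

private lemma gl9 (b d g sf x y sb : R) :
    b * g + sf * d
      = b * (g - x * d) + (b * x - x * sb) * d + (sf - (-y) * sb) * d
        + (x - y) * (sb * d) := by noncomm_ring

private lemma gl10 (f g b d sf sb x y : R) :
    f * g - x * (b * (g - x * d) + (b * x - x * sb) * d + (sf - (-y) * sb) * d
        + (x - y) * (sb * d))
      = (f - x * b) * (g - x * d)
        + ((f - x * b) * x - x * (sf - (-y) * sb)) * d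
        + (x * y) * (sb * d) := by noncomm_ring

private lemma gl11 (x y : R) (h : y * x = -(x * y)) :
    x * y * x - x * -(x * y) = 0 := by
  rw [mul_assoc, h]; noncomm_ring

private lemma gl12 (x z : R) (h : z * x = -(x * z)) :
    z * x - x * -z = 0 := by
  rw [h]; noncomm_ring

private lemma gl13 (a x : R) : a - x * 0 = a := by noncomm_ring

private lemma gladd (x a b sa sb : R) :
    (a + b) * x - x * (sa + sb) = (a * x - x * sa) + (b * x - x * sb) := by noncomm_ring

private lemma glmul (X x y sx sy : R) :
    (x * y) * X - X * (sx * sy) = (x * X - X * sx) * sy + x * (y * X - X * sy) := by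
  noncomm_ring

end AuxRingLemmas

/-- The kernel of `∂₁` equals the `k`-subalgebra of `R₃` generated by
`x₁ - x₂`, `x₁x₂` and `x₃` (in particular it is a `k`-subalgebra). -/
theorem stmt17 (k : Type*) [CommRing k]
    (s₁ : OddPoly3 k ≃ₐ[k] OddPoly3 k)
    (hs₁1 : s₁ (Y k 0) = - Y k 1) (hs₁2 : s₁ (Y k 1) = - Y k 0)
    (hs₁3 : s₁ (Y k 2) = - Y k 2)
    (D₁ : OddPoly3 k →ₗ[k] OddPoly3 k)
    (hD₁0 : D₁ 1 = 0) (hD₁1 : D₁ (Y k 0) = 1) (hD₁2 : D₁ (Y k 1) = 1)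
    (hD₁3 : D₁ (Y k 2) = 0)
    (hD₁L : ∀ f g : OddPoly3 k, D₁ (f * g) = D₁ f * g + s₁ f * D₁ g)
 :
    ∀ f : OddPoly3 k,
      f ∈ LinearMap.ker D₁ ↔
        f ∈ Algebra.adjoin k
          ({Y k 0 - Y k 1, Y k 0 * Y k 1, Y k 2} : Set (OddPoly3 k)) := by
  have hD₁alg : ∀ c : k, D₁ (algebraMap k (OddPoly3 k) c) = 0 := by
    intro c
    rw [Algebra.algebraMap_eq_smul_one, map_smul, hD₁0, smul_zero]
  have hs₁alg : ∀ c : k, s₁ (algebraMap k (OddPoly3 k) c) = algebraMap k (OddPoly3 k) c :=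
    fun c => s₁.commutes c
  have rel : ∀ i j : Fin 3, i < j → Y k i * Y k j + Y k j * Y k i = 0 := by
    intro i j h
    have := RingQuot.mkAlgHom_rel k (OddRel3.anticomm (k := k) i j h)
    simpa [Y, map_add, map_mul] using this
  have rel01 : Y k 1 * Y k 0 = -(Y k 0 * Y k 1) :=
    eq_neg_of_add_eq_zero_right (rel 0 1 (by decide))
  have rel02 : Y k 2 * Y k 0 = -(Y k 0 * Y k 2) :=
    eq_neg_of_add_eq_zero_right (rel 0 2 (by decide))
  have htop : Algebra.adjoin k (Set.range (Y k)) = ⊤ := by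
    have h1 : Set.range (Y k) =
        (RingQuot.mkAlgHom k (OddRel3 k)) '' Set.range (FreeAlgebra.ι k) := by
      rw [← Set.range_comp]; rfl
    rw [h1, ← AlgHom.map_adjoin, FreeAlgebra.adjoin_range_ι, Algebra.map_top,
      (AlgHom.range_eq_top _).mpr (RingQuot.mkAlgHom_surjective k _)]
  have ind : ∀ (P : OddPoly3 k → Prop),
      (∀ c : k, P (algebraMap k (OddPoly3 k) c)) →
      P (Y k 0) → P (Y k 1) → P (Y k 2) →
      (∀ f g, P f → P g → P (f + g)) → (∀ f g, P f → P g → P (f * g)) →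
      ∀ f, P f := by
    intro P halg h0 h1 h2 hadd hmul f
    have hf : f ∈ Algebra.adjoin k (Set.range (Y k)) := htop ▸ Algebra.mem_top
    induction hf using Algebra.adjoin_induction with
    | mem x hx =>
      obtain ⟨i, rfl⟩ := hx
      fin_cases i
      · exact h0
      · exact h1
      · exact h2
    | algebraMap c => exact halg c
    | add f g _ _ hf hg => exact hadd f g hf hg
    | mul f g _ _ hf hg => exact hmul f g hf hg
  have hss : ∀ f, s₁ (s₁ f) = f := by
    apply ind
    · intro c; rw [hs₁alg, hs₁alg]
    · rw [hs₁1, map_neg, hs₁2, neg_neg]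
    · rw [hs₁2, map_neg, hs₁1, neg_neg]
    · rw [hs₁3, map_neg, hs₁3, neg_neg]
    · intro f g hf hg; rw [map_add, map_add, hf, hg]
    · intro f g hf hg; rw [map_mul, map_mul, hf, hg]
  have hDs : ∀ f, D₁ (s₁ f) = - s₁ (D₁ f) := by
    apply ind
    · intro c
      rw [hs₁alg, hD₁alg, map_zero]
      exact neg_zero.symm
    · rw [hs₁1, hD₁1, map_one, map_neg, hD₁2]
    · rw [hs₁2, hD₁2, map_one, map_neg, hD₁1]
    · rw [hs₁3, hD₁3, map_zero, map_neg, hD₁3]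
    · intro f g hf hg
      rw [map_add, map_add, hf, hg, map_add, map_add]
      exact (neg_add _ _).symm
    · intro f g hf hg
      rw [map_mul, hD₁L, hf, hg, hss, hD₁L, map_add, map_mul, map_mul, hss]
      exact gl1 _ _ _ _
  have hDD : ∀ f, D₁ (D₁ f) = 0 := by
    apply ind
    · intro c; rw [hD₁alg, map_zero]
    · rw [hD₁1, hD₁0]
    · rw [hD₁2, hD₁0]
    · rw [hD₁3, map_zero]
    · intro f g hf hg; rw [map_add, map_add, hf, hg, add_zero]
    · intro f g hf hg
      rw [hD₁L, map_add, hD₁L, hD₁L, hf, hg, hDs, hss]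
      exact gl2 _ _ _ _
  set A := Algebra.adjoin k ({Y k 0 - Y k 1, Y k 0 * Y k 1, Y k 2} : Set (OddPoly3 k)) with hA
  have hg1A : Y k 0 - Y k 1 ∈ A := Algebra.subset_adjoin (by simp)
  have hg2A : Y k 0 * Y k 1 ∈ A := Algebra.subset_adjoin (by simp)
  have hg3A : Y k 2 ∈ A := Algebra.subset_adjoin (by simp)
  have hs₁g1 : s₁ (Y k 0 - Y k 1) = Y k 0 - Y k 1 := by
    rw [map_sub, hs₁1, hs₁2]
    exact neg_sub_neg _ _
  have hs₁g2 : s₁ (Y k 0 * Y k 1) = -(Y k 0 * Y k 1) := by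
    rw [map_mul, hs₁1, hs₁2]
    exact (neg_mul_neg _ _).trans rel01
  have hsA : ∀ a ∈ A, s₁ a ∈ A := by
    intro a ha
    induction ha using Algebra.adjoin_induction with
    | mem x hx =>
      rcases hx with h | h | h
      · rw [h, hs₁g1]; exact hg1A
      · rw [h, hs₁g2]; exact neg_mem hg2A
      · rw [h, hs₁3]; exact neg_mem hg3A
    | algebraMap c => rw [hs₁alg]; exact algebraMap_mem A c
    | add x y _ _ hx hy => rw [map_add]; exact add_mem hx hy
    | mul x y _ _ hx hy => rw [map_mul]; exact mul_mem hx hy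
  have hDA : ∀ a ∈ A, D₁ a = 0 := by
    intro a ha
    induction ha using Algebra.adjoin_induction with
    | mem x hx =>
      rcases hx with h | h | h
      · rw [h, map_sub, hD₁1, hD₁2, sub_self]
      · rw [h, hD₁L, hD₁1, hD₁2, hs₁1]
        exact gl3 _
      · rw [h, hD₁3]
    | algebraMap c => exact hD₁alg c
    | add x y _ _ hx hy => rw [map_add, hx, hy, add_zero]
    | mul x y _ _ hx hy => rw [hD₁L, hx, hy, zero_mul, mul_zero, add_zero]
  have hT : ∀ a ∈ A, a * Y k 0 - Y k 0 * s₁ a ∈ A := by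
    intro a ha
    induction ha using Algebra.adjoin_induction with
    | mem x hx =>
      rcases hx with h | h | h
      · rw [h, hs₁g1]
        have he : (Y k 0 - Y k 1) * Y k 0 - Y k 0 * (Y k 0 - Y k 1)
            = Y k 0 * Y k 1 + Y k 0 * Y k 1 := gl4 _ _ rel01
        rw [he]; exact add_mem hg2A hg2A
      · rw [h, hs₁g2]
        have he : Y k 0 * Y k 1 * Y k 0 - Y k 0 * -(Y k 0 * Y k 1) = 0 := gl11 _ _ rel01
        rw [he]; exact zero_mem A
      · rw [h, hs₁3]
        have he : Y k 2 * Y k 0 - Y k 0 * -Y k 2 = 0 := gl12 _ _ rel02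
        rw [he]; exact zero_mem A
    | algebraMap c =>
      rw [hs₁alg]
      have he : algebraMap k (OddPoly3 k) c * Y k 0 - Y k 0 * algebraMap k (OddPoly3 k) c
          = 0 := by rw [Algebra.commutes]; exact sub_self _
      rw [he]; exact zero_mem A
    | add x y hxA hyA hx hy =>
      have he : (x + y) * Y k 0 - Y k 0 * (s₁ x + s₁ y)
          = (x * Y k 0 - Y k 0 * s₁ x) + (y * Y k 0 - Y k 0 * s₁ y) := gladd _ _ _ _ _
      rw [map_add, he]; exact add_mem hx hy
    | mul x y hxA hyA hx hy =>
      have he : (x * y) * Y k 0 - Y k 0 * (s₁ x * s₁ y)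
          = (x * Y k 0 - Y k 0 * s₁ x) * s₁ y + x * (y * Y k 0 - Y k 0 * s₁ y) :=
        glmul _ _ _ _ _
      rw [map_mul, he]
      exact add_mem (mul_mem hx (hsA y hyA)) (mul_mem hxA hy)
  have hdec : ∀ f, D₁ f ∈ A ∧ f - Y k 0 * D₁ f ∈ A := by
    apply ind
    · intro c
      refine ⟨hD₁alg c ▸ zero_mem A, ?_⟩
      have he : algebraMap k (OddPoly3 k) c - Y k 0 * 0 = algebraMap k (OddPoly3 k) c :=
        gl7 _ _
      rw [hD₁alg, he]; exact algebraMap_mem A c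
    · refine ⟨hD₁1 ▸ one_mem A, ?_⟩
      have he : Y k 0 - Y k 0 * 1 = 0 := gl6 _
      rw [hD₁1, he]; exact zero_mem A
    · refine ⟨hD₁2 ▸ one_mem A, ?_⟩
      have he : Y k 1 - Y k 0 * 1 = -(Y k 0 - Y k 1) := gl5 _ _
      rw [hD₁2, he]; exact neg_mem hg1A
    · refine ⟨hD₁3 ▸ zero_mem A, ?_⟩
      have he : Y k 2 - Y k 0 * 0 = Y k 2 := gl7 _ _
      rw [hD₁3, he]; exact hg3A
    · intro f g hf hg
      refine ⟨by rw [map_add]; exact add_mem hf.1 hg.1, ?_⟩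
      have he : f + g - Y k 0 * (D₁ f + D₁ g)
          = (f - Y k 0 * D₁ f) + (g - Y k 0 * D₁ g) := gl8 _ _ _ _ _
      rw [map_add, he]; exact add_mem hf.2 hg.2
    · intro f g hf hg
      have hsplit : s₁ (f - Y k 0 * D₁ f) = s₁ f - (-Y k 1) * s₁ (D₁ f) := by
        rw [map_sub, map_mul, hs₁1]
      have key : D₁ (f * g)
          = D₁ f * (g - Y k 0 * D₁ g)
            + (D₁ f * Y k 0 - Y k 0 * s₁ (D₁ f)) * D₁ g
            + s₁ (f - Y k 0 * D₁ f) * D₁ g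
            + (Y k 0 - Y k 1) * (s₁ (D₁ f) * D₁ g) := by
        rw [hD₁L, hsplit]
        exact gl9 _ _ _ _ _ _ _
      have hkeyA : D₁ (f * g) ∈ A := by
        rw [key]
        exact add_mem (add_mem (add_mem (mul_mem hf.1 hg.2)
          (mul_mem (hT _ hf.1) hg.1)) (mul_mem (hsA _ hf.2) hg.1))
          (mul_mem hg1A (mul_mem (hsA _ hf.1) hg.1))
      refine ⟨hkeyA, ?_⟩
      have he : f * g - Y k 0 * D₁ (f * g)
          = (f - Y k 0 * D₁ f) * (g - Y k 0 * D₁ g)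
            + ((f - Y k 0 * D₁ f) * Y k 0 - Y k 0 * s₁ (f - Y k 0 * D₁ f)) * D₁ g
            + (Y k 0 * Y k 1) * (s₁ (D₁ f) * D₁ g) := by
        rw [key, hsplit]
        exact gl10 _ _ _ _ _ _ _ _
      rw [he]
      exact add_mem (add_mem (mul_mem hf.2 hg.2) (mul_mem (hT _ hf.2) hg.1))
        (mul_mem hg2A (mul_mem (hsA _ hf.1) hg.1))
  intro f
  constructor
  · intro hf
    have h := (hdec f).2
    rw [LinearMap.mem_ker] at hf
    have h2 : f = f - Y k 0 * D₁ f := by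
      rw [hf]; exact (gl13 f (Y k 0)).symm
    rw [← h2] at h
    exact h
  · intro hf
    exact LinearMap.mem_ker.mpr (hDA f hf)
end

section
/- The family of monomials x₁^a · x₂^b · x₃^c, indexed by triples (a, b, c) ∈ ℕ³, is a basis of R₃ as a k-module. -/
namespace OddAux

variable (k : Type*) [CommRing k]

abbrev F := (ℕ × ℕ × ℕ) →₀ k

noncomputable def T (i : Fin 3) : Module.End k (F k) :=
  Finsupp.lift (F k) k (ℕ × ℕ × ℕ) fun p =>
    match i with
    | 0 => Finsupp.single (p.1 + 1, p.2.1, p.2.2) 1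
    | 1 => Finsupp.single (p.1, p.2.1 + 1, p.2.2) ((-1 : k) ^ p.1)
    | 2 => Finsupp.single (p.1, p.2.1, p.2.2 + 1) ((-1 : k) ^ (p.1 + p.2.1))

lemma T0_single (p : ℕ × ℕ × ℕ) (r : k) :
    T k 0 (Finsupp.single p r) = Finsupp.single (p.1 + 1, p.2.1, p.2.2) r := by
  simp [T, Finsupp.lift_apply, Finsupp.sum_single_index, Finsupp.smul_single]

lemma T1_single (p : ℕ × ℕ × ℕ) (r : k) :
    T k 1 (Finsupp.single p r) =
      Finsupp.single (p.1, p.2.1 + 1, p.2.2) (r * (-1 : k) ^ p.1) := by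
  simp [T, Finsupp.lift_apply, Finsupp.sum_single_index, Finsupp.smul_single, smul_eq_mul]

lemma T2_single (p : ℕ × ℕ × ℕ) (r : k) :
    T k 2 (Finsupp.single p r) =
      Finsupp.single (p.1, p.2.1, p.2.2 + 1) (r * (-1 : k) ^ (p.1 + p.2.1)) := by
  simp [T, Finsupp.lift_apply, Finsupp.sum_single_index, Finsupp.smul_single, smul_eq_mul]

lemma T01 : T k 0 * T k 1 + T k 1 * T k 0 = 0 := by
  apply Finsupp.lhom_ext
  intro p r
  simp only [LinearMap.add_apply, Module.End.mul_apply, LinearMap.zero_apply,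
    T0_single, T1_single, T2_single]
  rw [← Finsupp.single_add, ← Finsupp.single_zero (p.1 + 1, p.2.1 + 1, p.2.2)]
  congr 1
  simp [pow_succ]

lemma T02 : T k 0 * T k 2 + T k 2 * T k 0 = 0 := by
  apply Finsupp.lhom_ext
  intro p r
  simp only [LinearMap.add_apply, Module.End.mul_apply, LinearMap.zero_apply,
    T0_single, T1_single, T2_single]
  rw [← Finsupp.single_add, ← Finsupp.single_zero (p.1 + 1, p.2.1, p.2.2 + 1)]
  congr 1
  have : p.1 + 1 + p.2.1 = (p.1 + p.2.1) + 1 := by omega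
  rw [this]
  simp [pow_succ]

lemma T12 : T k 1 * T k 2 + T k 2 * T k 1 = 0 := by
  apply Finsupp.lhom_ext
  intro p r
  simp only [LinearMap.add_apply, Module.End.mul_apply, LinearMap.zero_apply,
    T0_single, T1_single, T2_single]
  rw [← Finsupp.single_add, ← Finsupp.single_zero (p.1, p.2.1 + 1, p.2.2 + 1)]
  congr 1
  have : p.1 + (p.2.1 + 1) = (p.1 + p.2.1) + 1 := by omega
  rw [this]
  simp [pow_succ]
  ring

lemma T_anticomm : ∀ (i j : Fin 3), i < j → T k i * T k j + T k j * T k i = 0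
  | 0, 1, _ => T01 k
  | 0, 2, _ => T02 k
  | 1, 2, _ => T12 k
  | 0, 0, h => absurd h (by decide)
  | 1, 0, h => absurd h (by decide)
  | 1, 1, h => absurd h (by decide)
  | 2, 0, h => absurd h (by decide)
  | 2, 1, h => absurd h (by decide)
  | 2, 2, h => absurd h (by decide)

/-- The regular representation of `OddPoly3` on `F`. -/
noncomputable def rho : OddPoly3 k →ₐ[k] Module.End k (F k) :=
  RingQuot.liftAlgHom k ⟨FreeAlgebra.lift k (T k), by
    rintro x y ⟨i, j, h⟩
    simp only [map_add, map_mul, FreeAlgebra.lift_ι_apply, map_zero]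
    exact T_anticomm k i j h⟩

lemma rho_Y (i : Fin 3) : rho k (Y k i) = T k i := by
  rw [Y, rho, RingQuot.liftAlgHom_mkAlgHom_apply, FreeAlgebra.lift_ι_apply]

/-- The monomials. -/
noncomputable def mono (p : ℕ × ℕ × ℕ) : OddPoly3 k :=
  Y k 0 ^ p.1 * Y k 1 ^ p.2.1 * Y k 2 ^ p.2.2

lemma T0_pow (a : ℕ) (p : ℕ × ℕ × ℕ) (r : k) :
    (T k 0 ^ a) (Finsupp.single p r) = Finsupp.single (p.1 + a, p.2.1, p.2.2) r := by
  induction a with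
  | zero => simp
  | succ n ih =>
      rw [pow_succ', Module.End.mul_apply, ih, T0_single]
      congr 1
      try simp
      try omega

lemma T1_pow (b : ℕ) (y z : ℕ) (r : k) :
    (T k 1 ^ b) (Finsupp.single (0, y, z) r) = Finsupp.single (0, y + b, z) r := by
  induction b with
  | zero => simp
  | succ n ih =>
      rw [pow_succ', Module.End.mul_apply, ih, T1_single]
      congr 1
      try simp
      try omega

lemma T2_pow (c : ℕ) (z : ℕ) (r : k) :
    (T k 2 ^ c) (Finsupp.single (0, 0, z) r) = Finsupp.single (0, 0, z + c) r := by
  induction c with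
  | zero => simp
  | succ n ih =>
      rw [pow_succ', Module.End.mul_apply, ih, T2_single]
      congr 1
      try simp
      try omega

lemma rho_mono (p : ℕ × ℕ × ℕ) :
    rho k (mono k p) (Finsupp.single 0 1) = Finsupp.single p 1 := by
  obtain ⟨a, b, c⟩ := p
  rw [mono, map_mul, map_mul, map_pow, map_pow, map_pow, rho_Y, rho_Y, rho_Y]
  rw [Module.End.mul_apply, Module.End.mul_apply]
  rw [show ((0 : ℕ × ℕ × ℕ)) = ((0 : ℕ), (0 : ℕ), (0 : ℕ)) from rfl]
  rw [T2_pow, T1_pow, T0_pow]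
  simp

/-- The linear map sending `single p 1` to the monomial `mono p`. -/
noncomputable def psi : F k →ₗ[k] OddPoly3 k :=
  Finsupp.linearCombination k (mono k)

lemma psi_single (p : ℕ × ℕ × ℕ) (r : k) :
    psi k (Finsupp.single p r) = r • mono k p := by
  simp [psi]

lemma psi_injective : Function.Injective (psi k) := by
  have h : ∀ f : F k, rho k (psi k f) (Finsupp.single 0 1) = f := by
    intro f
    induction f using Finsupp.induction_linear with
    | zero => simp
    | add f g hf hg => rw [map_add, map_add, LinearMap.add_apply, hf, hg]
    | single p r =>
        rw [psi_single, map_smul, LinearMap.smul_apply, rho_mono, Finsupp.smul_single,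
          smul_eq_mul, mul_one]
  intro f g hfg
  have := h f
  rw [hfg, h g] at this
  exact this.symm

-- anticommutation in OddPoly3
lemma Y_anticomm (i j : Fin 3) (h : i < j) :
    Y k j * Y k i = (-1 : ℤ) • (Y k i * Y k j) := by
  have := RingQuot.mkAlgHom_rel k (s := OddRel3 k) (OddRel3.anticomm i j h)
  simp only [map_add, map_mul, map_zero] at this
  rw [neg_one_zsmul]
  rw [← Y, ← Y] at this
  linear_combination (norm := noncomm_ring) this

lemma Y_pow_comm (i j : Fin 3) (h : i < j) (n : ℕ) :
    Y k j ^ n * Y k i = ((-1 : ℤ) ^ n) • (Y k i * Y k j ^ n) := by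
  induction n with
  | zero => simp
  | succ m ih =>
      rw [pow_succ, mul_assoc, Y_anticomm k i j h, mul_smul_comm, ← mul_assoc, ih,
        smul_mul_assoc, smul_smul, mul_assoc, ← pow_succ, ← pow_succ']

lemma Y_pow_pow (i j : Fin 3) (h : i < j) (n m : ℕ) :
    Y k j ^ n * Y k i ^ m = ((-1 : ℤ) ^ (n * m)) • (Y k i ^ m * Y k j ^ n) := by
  induction m with
  | zero => simp
  | succ l ih =>
      rw [pow_succ, ← mul_assoc, ih, smul_mul_assoc, mul_assoc, Y_pow_comm k i j h n,
        mul_smul_comm, smul_smul, ← pow_add, ← mul_assoc, ← pow_succ]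
      ring_nf

lemma mono_mul (p q : ℕ × ℕ × ℕ) :
    ∃ N : ℕ, mono k p * mono k q = ((-1 : ℤ) ^ N) • mono k (p + q) := by
  obtain ⟨a, b, c⟩ := p
  obtain ⟨a', b', c'⟩ := q
  refine ⟨c * a' + b * a' + c * b', ?_⟩
  have h01 : (0 : Fin 3) < 1 := by decide
  have h02 : (0 : Fin 3) < 2 := by decide
  have h12 : (1 : Fin 3) < 2 := by decide
  show Y k 0 ^ a * Y k 1 ^ b * Y k 2 ^ c * (Y k 0 ^ a' * Y k 1 ^ b' * Y k 2 ^ c') =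
    _ • (Y k 0 ^ (a + a') * Y k 1 ^ (b + b') * Y k 2 ^ (c + c'))
  calc Y k 0 ^ a * Y k 1 ^ b * Y k 2 ^ c * (Y k 0 ^ a' * Y k 1 ^ b' * Y k 2 ^ c')
      = Y k 0 ^ a * (Y k 1 ^ b * ((Y k 2 ^ c * Y k 0 ^ a') * (Y k 1 ^ b' * Y k 2 ^ c'))) := by
        simp only [mul_assoc]
    _ = Y k 0 ^ a * (Y k 1 ^ b * ((((-1 : ℤ) ^ (c * a')) • (Y k 0 ^ a' * Y k 2 ^ c)) *
          (Y k 1 ^ b' * Y k 2 ^ c'))) := by rw [Y_pow_pow k 0 2 h02]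
    _ = ((-1 : ℤ) ^ (c * a')) •
          (Y k 0 ^ a * ((Y k 1 ^ b * Y k 0 ^ a') * ((Y k 2 ^ c * Y k 1 ^ b') * Y k 2 ^ c'))) := by
        simp only [smul_mul_assoc, mul_smul_comm, mul_assoc]
    _ = ((-1 : ℤ) ^ (c * a')) •
          (Y k 0 ^ a * ((((-1 : ℤ) ^ (b * a')) • (Y k 0 ^ a' * Y k 1 ^ b)) *
            ((((-1 : ℤ) ^ (c * b')) • (Y k 1 ^ b' * Y k 2 ^ c)) * Y k 2 ^ c'))) := by
        rw [Y_pow_pow k 0 1 h01, Y_pow_pow k 1 2 h12]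
    _ = ((-1 : ℤ) ^ (c * a') * ((-1 : ℤ) ^ (b * a') * (-1 : ℤ) ^ (c * b'))) •
          (Y k 0 ^ a * (Y k 0 ^ a' * (Y k 1 ^ b * (Y k 1 ^ b' * (Y k 2 ^ c * Y k 2 ^ c'))))) := by
        simp only [smul_mul_assoc, mul_smul_comm, smul_smul, mul_assoc]
        congr 1
        ring
    _ = ((-1 : ℤ) ^ (c * a' + b * a' + c * b')) •
          (Y k 0 ^ (a + a') * Y k 1 ^ (b + b') * Y k 2 ^ (c + c')) := by
        rw [pow_add (Y k 0), pow_add (Y k 1), pow_add (Y k 2), ← pow_add, ← pow_add]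
        simp only [mul_assoc, add_assoc]

lemma span_mono_top :
    Submodule.span k (Set.range (mono k)) = ⊤ := by
  set S := Submodule.span k (Set.range (mono k)) with hS
  have hmem : ∀ p, mono k p ∈ S := fun p => Submodule.subset_span ⟨p, rfl⟩
  have hone : (1 : OddPoly3 k) ∈ S := by
    have := hmem 0
    simpa [mono] using this
  have hmul : ∀ x ∈ S, ∀ y ∈ S, x * y ∈ S := by
    intro x hx y hy
    induction hx using Submodule.span_induction generalizing y with
    | mem x hxm =>
        obtain ⟨p, rfl⟩ := hxm
        induction hy using Submodule.span_induction with
        | mem y hym =>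
            obtain ⟨q, rfl⟩ := hym
            obtain ⟨N, hN⟩ := mono_mul k p q
            rw [hN]
            rcases Nat.even_or_odd N with he | ho
            · rw [he.neg_one_pow, one_smul]; exact hmem _
            · rw [ho.neg_one_pow, neg_one_zsmul]; exact S.neg_mem (hmem _)
        | zero => simp
        | add u v hu hv ihu ihv => rw [mul_add]; exact S.add_mem ihu ihv
        | smul r u hu ihu => rw [mul_smul_comm]; exact S.smul_mem r ihu
    | zero => simp
    | add u v hu hv ihu ihv =>
        rw [add_mul]; exact S.add_mem (ihu y hy) (ihv y hy)
    | smul r u hu ihu => rw [smul_mul_assoc]; exact S.smul_mem r (ihu y hy)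
  rw [eq_top_iff]
  rintro x -
  obtain ⟨w, rfl⟩ := RingQuot.mkAlgHom_surjective k (OddRel3 k) x
  induction w using FreeAlgebra.induction with
  | grade0 r =>
      rw [AlgHom.commutes]
      rw [Algebra.algebraMap_eq_smul_one]
      exact S.smul_mem r hone
  | grade1 i =>
      have : RingQuot.mkAlgHom k (OddRel3 k) (FreeAlgebra.ι k i) = Y k i := rfl
      rw [this]
      fin_cases i
      · have := hmem (1, 0, 0); simpa [mono] using this
      · have := hmem (0, 1, 0); simpa [mono] using this
      · have := hmem (0, 0, 1); simpa [mono] using this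
  | mul x y hx hy => rw [map_mul]; exact hmul _ hx _ hy
  | add x y hx hy => rw [map_add]; exact S.add_mem hx hy

lemma psi_surjective : Function.Surjective (psi k) := by
  rw [← LinearMap.range_eq_top, psi, Finsupp.range_linearCombination, span_mono_top]

end OddAux

/-- The monomials `x₁^a · x₂^b · x₃^c`, `(a, b, c) ∈ ℕ³`, form a basis of
`R₃` as a `k`-module. -/
theorem stmt18 (k : Type*) [CommRing k] :
    ∃ b : Module.Basis (ℕ × ℕ × ℕ) k (OddPoly3 k),
      ∀ p : ℕ × ℕ × ℕ,
        b p = Y k 0 ^ p.1 * Y k 1 ^ p.2.1 * Y k 2 ^ p.2.2 := by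
  refine ⟨Module.Basis.ofRepr (LinearEquiv.ofBijective (OddAux.psi k)
    ⟨OddAux.psi_injective k, OddAux.psi_surjective k⟩).symm, fun p => ?_⟩
  rw [← Module.Basis.repr_symm_single_one]
  show (LinearEquiv.ofBijective (OddAux.psi k) _).symm.symm (Finsupp.single p 1) = _
  erw [LinearEquiv.symm_symm, LinearEquiv.ofBijective_apply, OddAux.psi_single, one_smul,
    OddAux.mono]
end
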